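/- arXiv:2102.08243 — 9 statements merged into one kernel-verified Lean document; each statement's English description precedes it below -/
import Mathlib

section
/- Let Γ : L × [D] → R be a bipartite graph with finite left side L, finite right side R and left degree D ≥ 1, and suppose it is a (K, γD) expander for a real γ with γD ≥ 1. Then for every set S ⊆ L with |S| ≤ K there exist sets of edge labels A_x ⊆ [D], one for each x ∈ S, such that |A_x| ≥ ⌊γD⌋ for every x ∈ S, and for all distinct x, x′ ∈ S and all i ∈ A_x, j ∈ A_{x′} one has Γ(x,i) ≠ Γ(x′,j) (i.e., the sets of right nodes assigned to different elements of S are pairwise disjoint). -/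
/-! Replace every `x ∈ S` by `b = ⌊γD⌋` copies `(x, 1), …, (x, b)`, each adjacent to the
neighbors of `x`. A set of copies living over `T ⊆ S` has at most `b·|T| ≤ γD·|T| ≤ |N(T)|`
elements, so Hall's condition holds and the copies can be matched injectively into `R`.
The matched edges of the copies of `x` form `A x`. -/

open Finset

/-- A bipartite graph `Γ : L × [D] → R` (as `Γ : L → ι → R` with an index type `ι`
for the edge labels) is a `(K, γ)` expander if every set `S ⊆ L` with `|S| ≤ K`
has at least `γ·|S|` neighbors. -/
def Expander {L R ι : Type*} [DecidableEq R] [Fintype ι]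
    (Γ : L → ι → R) (K : ℕ) (γ : ℝ) : Prop :=
  ∀ S : Finset L, S.card ≤ K →
    γ * (S.card : ℝ) ≤
      (((S ×ˢ (Finset.univ : Finset ι)).image fun q => Γ q.1 q.2).card : ℝ)

section Labeling

variable {L R ι : Type*} [DecidableEq R] [Fintype ι]

def neighborFinset (Γ : L → ι → R) (T : Finset L) : Finset R :=
  (T ×ˢ (univ : Finset ι)).image fun q => Γ q.1 q.2

theorem Expander.mul_card_le_card_neighborFinset {Γ : L → ι → R} {K : ℕ} {γ : ℝ}
    (hexp : Expander Γ K γ) {T : Finset L} (hTK : #T ≤ K) {b : ℕ} (hb : (b : ℝ) ≤ γ) :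
    b * #T ≤ #(neighborFinset Γ T) := by
  have : (b : ℝ) * #T ≤ #(neighborFinset Γ T) :=
    (mul_le_mul_of_nonneg_right hb (Nat.cast_nonneg _)).trans (hexp T hTK)
  exact_mod_cast this

variable [DecidableEq L] {Γ : L → ι → R} {S : Finset L} {b : ℕ}

theorem exists_injective_comp_of_mul_card_le_card_neighborFinset
    (hall : ∀ T ⊆ S, b * #T ≤ #(neighborFinset Γ T)) :
    ∃ g : S × Fin b → ι, Function.Injective fun p => Γ p.1 (g p) := by
  let t : S × Fin b → Finset R := fun p => univ.image (Γ p.1)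
  have hcond : ∀ s : Finset (S × Fin b), #s ≤ #(s.biUnion t) := by
    intro s
    set T := s.image fun p => (p.1 : L)
    have hfiber : ∀ x ∈ T, #{p ∈ s | (p.1 : L) = x} ≤ b := by
      refine fun x _ => (card_le_card_of_injOn Prod.snd (fun _ _ => mem_univ _) ?_).trans_eq
        (card_fin b)
      intro p hp q hq hpq
      simp only [coe_filter, Set.mem_ofPred_eq] at hp hq
      exact Prod.ext (Subtype.ext (hp.2.trans hq.2.symm)) hpq
    have hN : neighborFinset Γ T ⊆ s.biUnion t := by
      simp only [neighborFinset, T, subset_iff, mem_image, mem_product, mem_univ, and_true,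
        mem_biUnion, t, true_and]
      rintro _ ⟨⟨_, i⟩, ⟨p, hp, rfl⟩, rfl⟩
      exact ⟨p, hp, i, rfl⟩
    calc #s ≤ b * #T := card_le_mul_card_image s b hfiber
      _ ≤ #(neighborFinset Γ T) := hall T fun x hx => by
          obtain ⟨p, -, rfl⟩ := mem_image.1 hx
          exact p.1.2
      _ ≤ #(s.biUnion t) := card_le_card hN
  obtain ⟨f, hf_inj, hf_mem⟩ := (all_card_le_biUnion_card_iff_exists_injective t).1 hcond
  choose g hg using fun p => mem_image.1 (hf_mem p)
  refine ⟨g, fun p q hpq => hf_inj ?_⟩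
  simpa only [(hg _).2] using hpq

theorem exists_disjoint_labels_of_mul_card_le_card_neighborFinset [DecidableEq ι]
    (hall : ∀ T ⊆ S, b * #T ≤ #(neighborFinset Γ T)) :
    ∃ A : L → Finset ι, (∀ x ∈ S, b ≤ #(A x)) ∧
      ∀ x ∈ S, ∀ x' ∈ S, x ≠ x' → ∀ i ∈ A x, ∀ j ∈ A x', Γ x i ≠ Γ x' j := by
  obtain ⟨g, hg⟩ := exists_injective_comp_of_mul_card_le_card_neighborFinset hall
  refine ⟨fun x => if hx : x ∈ S then univ.image fun k => g (⟨x, hx⟩, k) else ∅, ?_, ?_⟩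
  · intro x hx
    have hinj : Function.Injective fun k => g (⟨x, hx⟩, k) := fun k k' hkk' =>
      (Prod.ext_iff.1 (@hg (⟨x, hx⟩, k) (⟨x, hx⟩, k') (congrArg (Γ x) hkk'))).2
    simp [hx, card_image_of_injective _ hinj]
  · intro x hx x' hx' hne i hi j hj hij
    simp only [hx, hx', dite_true, mem_image, mem_univ, true_and] at hi hj
    obtain ⟨k, rfl⟩ := hi
    obtain ⟨k', rfl⟩ := hj
    exact hne (congrArg (fun p : S × Fin b => (p.1 : L)) (@hg (⟨x, hx⟩, k) (⟨x', hx'⟩, k') hij))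

end Labeling

theorem offline_matching_of_expander_general
    {L R : Type*} [DecidableEq L] [DecidableEq R]
    (D : ℕ) (Γ : L → Fin D → R) (K : ℕ) (γ : ℝ)
    (hγD : 1 ≤ γ * (D : ℝ))
    (hexp : Expander Γ K (γ * D)) :
    ∀ S : Finset L, S.card ≤ K →
      ∃ A : L → Finset (Fin D),
        (∀ x ∈ S, ⌊γ * (D : ℝ)⌋ ≤ ((A x).card : ℤ)) ∧
        (∀ x ∈ S, ∀ x' ∈ S, x ≠ x' →
          ∀ i ∈ A x, ∀ j ∈ A x', Γ x i ≠ Γ x' j) := by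
  intro S hSK
  have hγD₀ : 0 ≤ γ * D := zero_le_one.trans hγD
  have hall : ∀ T ⊆ S, ⌊γ * D⌋₊ * #T ≤ #(neighborFinset Γ T) := fun T hT =>
    hexp.mul_card_le_card_neighborFinset ((card_le_card hT).trans hSK) (Nat.floor_le hγD₀)
  obtain ⟨A, hA_card, hA_disj⟩ := exists_disjoint_labels_of_mul_card_le_card_neighborFinset hall
  refine ⟨A, fun x hx => ?_, hA_disj⟩
  rw [← Int.natCast_floor_eq_floor hγD₀]
  exact_mod_cast hA_card x hx

/-- **Offline matching in lossless expanders.**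
If `Γ : L × [D] → R` (with `D ≥ 1`) is a `(K, γD)` expander with `γD ≥ 1`, then for
every `S ⊆ L` with `|S| ≤ K` there are sets of edge labels `A x ⊆ [D]` for `x ∈ S`,
each of size at least `⌊γD⌋`, such that the right nodes assigned to different
elements of `S` are pairwise disjoint. -/
theorem offline_matching_of_expander
    {L R : Type*} [Fintype L] [Fintype R] [DecidableEq L] [DecidableEq R]
    (D : ℕ) (hD : 1 ≤ D) (Γ : L → Fin D → R) (K : ℕ) (γ : ℝ)
    (hγD : 1 ≤ γ * (D : ℝ))
    (hexp : Expander Γ K (γ * D)) :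
    ∀ S : Finset L, S.card ≤ K →
      ∃ A : L → Finset (Fin D),
        (∀ x ∈ S, ⌊γ * (D : ℝ)⌋ ≤ ((A x).card : ℤ)) ∧
        (∀ x ∈ S, ∀ x' ∈ S, x ≠ x' →
          ∀ i ∈ A x, ∀ j ∈ A x', Γ x i ≠ Γ x' j) :=
  offline_matching_of_expander_general D Γ K γ hγD hexp
end

section
/- Let Γ : L × [D] → R be a bipartite graph with finite left side L, finite right side R and left degree D ≥ 1 that has (r, K, ε) bounded right degree, where r ≥ 1 is an integer and ε > 0. Then for every nonempty set S ⊆ L with |S| ≤ K, the number of right nodes that are heavy for S is strictly less than (1/r)·ε·D·|S|. -/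
open Finset

/-- `|ℰ(S, p)|`: the number of edges `(x, i)` with `x ∈ S` whose right endpoint is `p`. -/
def edgeCount {L R ι : Type*} [DecidableEq L] [DecidableEq R] [Fintype ι]
    (Γ : L → ι → R) (S : Finset L) (p : R) : ℕ :=
  ((S ×ˢ (Finset.univ : Finset ι)).filter fun q => Γ q.1 q.2 = p).card

/-- `excess_S(r) = Σ_{p ∈ R} max(|ℰ(S,p)| − r, 0)` (here `ℕ`-subtraction is truncated). -/
def excess {L R ι : Type*} [DecidableEq L] [Fintype R] [DecidableEq R] [Fintype ι]
    (Γ : L → ι → R) (S : Finset L) (r : ℕ) : ℕ :=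
  ∑ p : R, (edgeCount Γ S p - r)

/-- The graph has `(r, K, ε)` bounded right degree if `excess_S(r) ≤ ε·D·|S|`
for every `S ⊆ L` with `|S| ≤ K`, where `D` is the left degree. -/
def BoundedRightDegree {L R ι : Type*} [DecidableEq L] [Fintype R] [DecidableEq R] [Fintype ι]
    (Γ : L → ι → R) (r K : ℕ) (ε : ℝ) : Prop :=
  ∀ S : Finset L, S.card ≤ K →
    (excess Γ S r : ℝ) ≤ ε * (Fintype.card ι : ℝ) * (S.card : ℝ)

/-- A right node `p` is heavy for `S` if it has more than `2r` distinct neighbors in `S`. -/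
def Heavy {L R ι : Type*} (Γ : L → ι → R) (S : Finset L) (r : ℕ) (p : R) : Prop :=
  2 * r < {x : L | x ∈ S ∧ ∃ i : ι, Γ x i = p}.ncard

/- A heavy right node has more than `2r` incident edges, so each contributes more than `r` to the
excess; with the bounded right degree this gives `(r + 1)·#heavy ≤ ε·D·|S|`, and `ε·D·|S| > 0`
makes the bound strict even when there is no heavy node. -/

lemma ncard_neighbors_le_edgeCount {L R ι : Type*} [DecidableEq L] [DecidableEq R] [Fintype ι]
    (Γ : L → ι → R) (S : Finset L) (p : R) :
    {x : L | x ∈ S ∧ ∃ i : ι, Γ x i = p}.ncard ≤ edgeCount Γ S p := by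
  have hneighbors : {x : L | x ∈ S ∧ ∃ i : ι, Γ x i = p} =
      ↑(((S ×ˢ (univ : Finset ι)).filter fun q => Γ q.1 q.2 = p).image Prod.fst) := by
    ext x
    simp
  rw [hneighbors, Set.ncard_coe_finset]
  exact card_image_le

lemma Heavy.lt_edgeCount {L R ι : Type*} [DecidableEq L] [DecidableEq R] [Fintype ι]
    {Γ : L → ι → R} {S : Finset L} {r : ℕ} {p : R} (hp : Heavy Γ S r p) :
    2 * r < edgeCount Γ S p :=
  hp.trans_le (ncard_neighbors_le_edgeCount Γ S p)

lemma succ_mul_ncard_heavy_le_excess {L R ι : Type*} [DecidableEq L] [Fintype R] [DecidableEq R]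
    [Fintype ι] (Γ : L → ι → R) (S : Finset L) (r : ℕ) :
    (r + 1) * {p : R | Heavy Γ S r p}.ncard ≤ excess Γ S r := by
  classical
  rw [Set.ncard_eq_toFinset_card', Set.toFinset_ofPred, mul_comm, ← smul_eq_mul]
  calc #(univ.filter (Heavy Γ S r)) • (r + 1)
      ≤ ∑ p ∈ univ.filter (Heavy Γ S r), (edgeCount Γ S p - r) :=
        card_nsmul_le_sum _ _ _ fun p hp => by
          have := (mem_filter.mp hp).2.lt_edgeCount
          omega
    _ ≤ excess Γ S r := sum_le_sum_of_subset (subset_univ _)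

theorem heavy_count_lt_general
    {L R : Type*} [Fintype R] [DecidableEq L] [DecidableEq R]
    (D : ℕ) (hD : 1 ≤ D) (Γ : L → Fin D → R) (r K : ℕ) (hr : 1 ≤ r) (ε : ℝ) (hε : 0 < ε)
    (hbd : BoundedRightDegree Γ r K ε) :
    ∀ S : Finset L, S.Nonempty → S.card ≤ K →
      ({p : R | Heavy Γ S r p}.ncard : ℝ) < (1 / (r : ℝ)) * ε * (D : ℝ) * (S.card : ℝ) := by
  intro S hS hSK
  set nHeavy := {p : R | Heavy Γ S r p}.ncard
  have hexcess : ((r + 1 : ℕ) * nHeavy : ℝ) ≤ ε * D * S.card := by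
    have hbound := hbd S hSK
    rw [Fintype.card_fin] at hbound
    exact le_trans (mod_cast succ_mul_ncard_heavy_le_excess Γ S r) hbound
  have hpos : 0 < ε * D * S.card := by
    have : (0 : ℝ) < D := by exact_mod_cast hD
    have : (0 : ℝ) < S.card := by exact_mod_cast hS.card_pos
    positivity
  have hr' : (0 : ℝ) < r := by exact_mod_cast hr
  rw [mul_assoc, mul_assoc, one_div_mul_eq_div, lt_div_iff₀ hr', ← mul_assoc]
  rcases nHeavy.eq_zero_or_pos with h0 | h0
  · simpa [h0] using hpos
  · have : (0 : ℝ) < nHeavy := by exact_mod_cast h0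
    push_cast at hexcess
    linarith

/-- If `Γ : L × [D] → R` (with `D ≥ 1`) has `(r, K, ε)` bounded right degree
(`r ≥ 1` an integer, `ε > 0`), then for every nonempty `S ⊆ L` with `|S| ≤ K`,
the number of right nodes heavy for `S` is `< (1/r)·ε·D·|S|`. -/
theorem heavy_count_lt
    {L R : Type*} [Fintype L] [Fintype R] [DecidableEq L] [DecidableEq R]
    (D : ℕ) (hD : 1 ≤ D) (Γ : L → Fin D → R) (r K : ℕ) (hr : 1 ≤ r) (ε : ℝ) (hε : 0 < ε)
    (hbd : BoundedRightDegree Γ r K ε) :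
    ∀ S : Finset L, S.Nonempty → S.card ≤ K →
      ({p : R | Heavy Γ S r p}.ncard : ℝ) < (1 / (r : ℝ)) * ε * (D : ℝ) * (S.card : ℝ) :=
  heavy_count_lt_general D hD Γ r K hr ε hε hbd
end

section
/- Let Γ : L × [D] → R be a bipartite graph with finite left side L, finite right side R and left degree D ≥ 1 that has (r, K, ε) bounded right degree, where r ≥ 1 is an integer, ε > 0, and K ≥ 2. Then the graph admits ((1−4ε)D, 2⌈log₂ K⌉·r) online matching up to size K. -/
open Finset

/-- The graph `Γ : L → ι → R` admits `(ℓ, r)` online matching up to size `K` if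
there is an assignment function `f` from (list of requests, left node) to sets of
edge labels such that: (1) nodes not in the list get the empty set; (2) a node in
the list gets at least `ℓ` labels, and its assigned set is stable under extending
the list (within the size bound `K`); (3) for every right node `p` and every list,
at most `r` distinct listed nodes have an assigned edge ending in `p`. -/
def OnlineMatching {L R ι : Type*} (Γ : L → ι → R) (ℓ : ℝ) (r K : ℕ) : Prop :=
  ∃ f : List L → L → Finset ι,
    (∀ S : List L, S.length ≤ K → ∀ x : L,
      (x ∉ S → f S x = ∅) ∧
      (x ∈ S →
        (ℓ ≤ ((f S x).card : ℝ) ∧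
         ∀ S' : List L, S'.length ≤ K → S <+: S' → f S x = f S' x))) ∧
    (∀ S : List L, S.length ≤ K → ∀ p : R,
      {x : L | x ∈ S ∧ ∃ i ∈ f S x, Γ x i = p}.ncard ≤ r)

/-!
When a request `x` arrives, peel the set `T` of requests so far: `A₀ = T` and `A_{k+1}` keeps the
nodes of `A_k` with more than `4εD` edges into right nodes that are heavy for `A_k`. A heavy node
carries more than `2r` edges, so at least half of them are excess; hence the heavy edges of `A_k`
number at most `2·excess ≤ 2εD|A_k|`, and `|A_{k+1}| < |A_k| / 2`. So `x` drops out at some round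
`k < ⌈log₂ K⌉` and is assigned its at least `(1 - 4ε)D` edges into nodes not heavy for `A_k`.
Assignments never change later, since they depend only on the requests up to `x`. For a right node
`p` and a round `k`, the requests assigned an edge into `p` at round `k` all lie in the `k`-th
peeling set of the last of them to arrive, where `p` has at most `2r` neighbours; summing over the
rounds bounds the load of `p` by `2⌈log₂ K⌉r`.
-/

section Arrivals

variable {L : Type*} [DecidableEq L]

def arrivals (S : List L) (x : L) : Finset L := (S.take (S.idxOf x + 1)).toFinset

lemma mem_arrivals_self {S : List L} {x : L} (hx : x ∈ S) : x ∈ arrivals S x := by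
  rw [arrivals, List.mem_toFinset]
  exact List.mem_take_iff_getElem.2
    ⟨S.idxOf x, by grind [List.idxOf_lt_length_iff], List.getElem_idxOf _⟩

lemma card_arrivals_le (S : List L) (x : L) : #(arrivals S x) ≤ S.length :=
  (List.toFinset_card_le _).trans (List.length_take_le' _ _)

lemma arrivals_of_prefix {S S' : List L} {x : L} (hpre : S <+: S') (hx : x ∈ S) :
    arrivals S' x = arrivals S x := by
  obtain ⟨t, rfl⟩ := hpre
  rw [arrivals, arrivals, List.idxOf_append_of_mem hx,
    List.take_append_of_le_length (List.idxOf_lt_length_iff.2 hx)]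

lemma arrivals_mono {S : List L} {x y : L} (h : S.idxOf x ≤ S.idxOf y) :
    arrivals S x ⊆ arrivals S y := by
  intro a ha
  rw [arrivals, List.mem_toFinset] at ha ⊢
  exact (List.take_prefix_take_left (by omega)).subset ha

end Arrivals

namespace BipartiteGraph

variable {L R ι : Type*} (Γ : L → ι → R) (r : ℕ)

lemma heavy_mono {A A' : Finset L} (h : A ⊆ A') {p : R} (hp : Heavy Γ A r p) :
    Heavy Γ A' r p :=
  hp.trans_le <| Set.ncard_le_ncard (fun _ hx => ⟨h hx.1, hx.2⟩)
    (A'.finite_toSet.subset fun _ hx => hx.1)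

variable [Fintype ι]

open scoped Classical in
noncomputable def heavyDegree (A : Finset L) (x : L) : ℕ :=
  #{i : ι | Heavy Γ A r (Γ x i)}

lemma heavyDegree_mono {A A' : Finset L} (h : A ⊆ A') (x : L) :
    heavyDegree Γ r A x ≤ heavyDegree Γ r A' x := by
  classical
  exact card_le_card fun i hi => by
    simp only [mem_filter, mem_univ, true_and] at hi ⊢
    exact heavy_mono Γ r h hi

variable (t : ℝ)

noncomputable def peeling (T : Finset L) : ℕ → Finset L
  | 0 => T
  | k + 1 => {x ∈ peeling T k | t < heavyDegree Γ r (peeling T k) x}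

lemma peeling_succ_subset (T : Finset L) (k : ℕ) :
    peeling Γ r t T (k + 1) ⊆ peeling Γ r t T k :=
  filter_subset _ _

lemma peeling_subset (T : Finset L) (k : ℕ) : peeling Γ r t T k ⊆ T := by
  induction k with
  | zero => exact subset_rfl
  | succ k ih => exact (peeling_succ_subset Γ r t T k).trans ih

lemma peeling_mono {T T' : Finset L} (h : T ⊆ T') (k : ℕ) :
    peeling Γ r t T k ⊆ peeling Γ r t T' k := by
  induction k with
  | zero => exact h
  | succ k ih =>
    intro x hx
    simp only [peeling, mem_filter] at hx ⊢
    exact ⟨ih hx.1, hx.2.trans_le (by exact_mod_cast heavyDegree_mono Γ r ih x)⟩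

/-- The round at which `x` is peeled off (junk value `0` if it never is). -/
noncomputable def level (T : Finset L) (x : L) : ℕ :=
  sInf {k | x ∉ peeling Γ r t T (k + 1)}

lemma mem_peeling_level {T : Finset L} {x : L} (hx : x ∈ T) :
    x ∈ peeling Γ r t T (level Γ r t T x) := by
  rcases h : level Γ r t T x with _ | m
  · exact hx
  · have hm : m < level Γ r t T x := h ▸ m.lt_succ_self
    by_contra hout
    exact Nat.notMem_of_lt_sInf hm hout

lemma heavyDegree_peeling_level_le {T : Finset L} {x : L} (hx : x ∈ T)
    (hpeeled : ∃ k, x ∉ peeling Γ r t T (k + 1)) :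
    heavyDegree Γ r (peeling Γ r t T (level Γ r t T x)) x ≤ t := by
  have hout : x ∉ peeling Γ r t T (level Γ r t T x + 1) := Nat.sInf_mem hpeeled
  simp only [peeling, mem_filter, not_and, not_lt] at hout
  exact hout (mem_peeling_level Γ r t hx)

variable [DecidableEq L]

open scoped Classical in
noncomputable def assignment (S : List L) (x : L) : Finset ι :=
  if x ∈ S then
    ({i | ¬Heavy Γ (peeling Γ r t (arrivals S x) (level Γ r t (arrivals S x) x)) r (Γ x i)} :
      Finset ι)
  else ∅

lemma assignment_of_notMem {S : List L} {x : L} (hx : x ∉ S) :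
    assignment Γ r t S x = ∅ := if_neg hx

lemma assignment_eq_of_prefix {S S' : List L} (hpre : S <+: S') {x : L} (hx : x ∈ S) :
    assignment Γ r t S x = assignment Γ r t S' x := by
  rw [assignment, assignment, if_pos hx, if_pos (hpre.subset hx), arrivals_of_prefix hpre hx]

lemma card_assignment_add_heavyDegree {S : List L} {x : L} (hx : x ∈ S) :
    #(assignment Γ r t S x) + heavyDegree Γ r (peeling Γ r t (arrivals S x)
      (level Γ r t (arrivals S x) x)) x = Fintype.card ι := by
  classical
  rw [assignment, if_pos hx, heavyDegree, add_comm]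
  convert card_filter_add_card_filter_not (s := univ) _
  exact card_univ.symm

variable [DecidableEq R]

lemma ncard_adj_le_edgeCount (A : Finset L) (p : R) :
    {x : L | x ∈ A ∧ ∃ i : ι, Γ x i = p}.ncard ≤ edgeCount Γ A p := by
  have : {x : L | x ∈ A ∧ ∃ i : ι, Γ x i = p} =
      ↑(((A ×ˢ (univ : Finset ι)).filter fun q => Γ q.1 q.2 = p).image Prod.fst) := by
    ext x; simp
  rw [this, Set.ncard_coe_finset]
  exact card_image_le

noncomputable def assignedTo (S : List L) (p : R) : Finset L :=
  {x ∈ S.toFinset | ∃ i ∈ assignment Γ r t S x, Γ x i = p}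

lemma coe_assignedTo (S : List L) (p : R) :
    (assignedTo Γ r t S p : Set L) = {x | x ∈ S ∧ ∃ i ∈ assignment Γ r t S x, Γ x i = p} := by
  ext x; simp [assignedTo]

lemma card_assignedTo_level_le (S : List L) (p : R) (m : ℕ) :
    #{x ∈ assignedTo Γ r t S p | level Γ r t (arrivals S x) x = m} ≤ 2 * r := by
  classical
  set F := {x ∈ assignedTo Γ r t S p | level Γ r t (arrivals S x) x = m}
  rcases F.eq_empty_or_nonempty with hF | hF
  · simp [hF]
  obtain ⟨y, hyF, hlast⟩ := exists_max_image F S.idxOf hF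
  simp only [F, assignedTo, mem_filter, List.mem_toFinset] at hyF
  obtain ⟨⟨hyS, i, hi, rfl⟩, hym⟩ := hyF
  have hlight : ¬Heavy Γ (peeling Γ r t (arrivals S y) m) r (Γ y i) := by
    rw [assignment, if_pos hyS, hym] at hi
    exact (mem_filter.1 hi).2
  rw [← Set.ncard_coe_finset]
  refine (Set.ncard_le_ncard (fun x hx => ?_) ((peeling Γ r t _ m).finite_toSet.subset
    fun _ hx => hx.1)).trans (not_lt.1 hlight)
  obtain ⟨⟨hxS, j, -, hj⟩, hxm⟩ := by
    simpa only [F, assignedTo, coe_filter, mem_filter, List.mem_toFinset] using hx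
  refine ⟨peeling_mono Γ r t (arrivals_mono (hlast x hx)) m ?_, j, hj⟩
  rw [← hxm]
  exact mem_peeling_level Γ r t (mem_arrivals_self hxS)

variable [Fintype R]

lemma sum_heavyDegree_le_two_mul_excess (A : Finset L) :
    ∑ x ∈ A, heavyDegree Γ r A x ≤ 2 * excess Γ A r := by
  classical
  calc ∑ x ∈ A, heavyDegree Γ r A x
      = #{q ∈ A ×ˢ (univ : Finset ι) | Heavy Γ A r (Γ q.1 q.2)} := by
        simp only [heavyDegree, card_filter, sum_product]
    _ = ∑ p : R, #{q ∈ A ×ˢ (univ : Finset ι) | Heavy Γ A r (Γ q.1 q.2) ∧ Γ q.1 q.2 = p} := by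
        rw [card_eq_sum_card_fiberwise (f := fun q => Γ q.1 q.2) (t := univ) (by simp)]
        simp only [filter_filter]
    _ ≤ ∑ p : R, 2 * (edgeCount Γ A p - r) := by
        refine sum_le_sum fun p _ => ?_
        by_cases hp : Heavy Γ A r p
        · have hfiber : #{q ∈ A ×ˢ (univ : Finset ι) | Heavy Γ A r (Γ q.1 q.2) ∧ Γ q.1 q.2 = p}
              = edgeCount Γ A p :=
            congrArg card (filter_congr fun q _ => ⟨And.right, fun h => ⟨h ▸ hp, h⟩⟩)
          have := hp.trans_le (ncard_adj_le_edgeCount Γ A p)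
          omega
        · refine (card_eq_zero.2 (filter_false_of_mem ?_)).trans_le (Nat.zero_le _)
          rintro q - ⟨hq, rfl⟩
          exact hp hq
    _ = 2 * excess Γ A r := by rw [excess, mul_sum]

section BoundedRightDegree

variable {r} {K : ℕ} {ε : ℝ}

lemma two_mul_card_filter_heavyDegree_lt (hε : 0 ≤ ε) (hbd : BoundedRightDegree Γ r K ε)
    {A : Finset L} (hA : #A ≤ K)
    (hne : {x ∈ A | 4 * ε * Fintype.card ι < heavyDegree Γ r A x}.Nonempty) :
    2 * #{x ∈ A | 4 * ε * Fintype.card ι < heavyDegree Γ r A x} < #A := by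
  set A' := {x ∈ A | 4 * ε * Fintype.card ι < heavyDegree Γ r A x}
  have hsurvivors : 4 * ε * Fintype.card ι * #A' < ∑ x ∈ A', (heavyDegree Γ r A x : ℝ) := by
    simpa [mul_comm] using sum_lt_sum_of_nonempty hne fun x hx => (mem_filter.1 hx).2
  have hall : ∑ x ∈ A', (heavyDegree Γ r A x : ℝ) ≤ 2 * (ε * Fintype.card ι * #A) := by
    calc ∑ x ∈ A', (heavyDegree Γ r A x : ℝ)
        ≤ ∑ x ∈ A, (heavyDegree Γ r A x : ℝ) :=
          sum_le_sum_of_subset_of_nonneg (filter_subset _ _) fun _ _ _ => by positivity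
      _ ≤ 2 * (excess Γ A r : ℝ) := by exact_mod_cast sum_heavyDegree_le_two_mul_excess Γ r A
      _ ≤ 2 * (ε * Fintype.card ι * #A) := by linarith [hbd A hA]
  have hεD : 0 ≤ ε * Fintype.card ι := by positivity
  by_contra! h
  have : (#A : ℝ) ≤ 2 * #A' := by exact_mod_cast h
  nlinarith

lemma two_mul_card_peeling_succ_lt (hε : 0 ≤ ε) (hbd : BoundedRightDegree Γ r K ε)
    {T : Finset L} (hT : #T ≤ K) (k : ℕ)
    (hne : (peeling Γ r (4 * ε * Fintype.card ι) T (k + 1)).Nonempty) :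
    2 * #(peeling Γ r (4 * ε * Fintype.card ι) T (k + 1)) <
      #(peeling Γ r (4 * ε * Fintype.card ι) T k) :=
  two_mul_card_filter_heavyDegree_lt Γ hε hbd
    ((card_le_card (peeling_subset Γ r _ T k)).trans hT) hne

lemma two_pow_mul_card_peeling_lt (hε : 0 ≤ ε) (hbd : BoundedRightDegree Γ r K ε)
    {T : Finset L} (hT : #T ≤ K) (k : ℕ)
    (hne : (peeling Γ r (4 * ε * Fintype.card ι) T (k + 1)).Nonempty) :
    2 ^ (k + 1) * #(peeling Γ r (4 * ε * Fintype.card ι) T (k + 1)) < #T := by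
  induction k with
  | zero => rw [zero_add, pow_one]; exact two_mul_card_peeling_succ_lt Γ hε hbd hT 0 hne
  | succ k ih =>
    have := ih (hne.mono (peeling_succ_subset Γ r _ T _))
    have := two_mul_card_peeling_succ_lt Γ hε hbd hT (k + 1) hne
    rw [pow_succ]
    nlinarith [Nat.one_le_two_pow (n := k + 1)]

lemma exists_notMem_peeling (hε : 0 ≤ ε) (hbd : BoundedRightDegree Γ r K ε)
    {T : Finset L} (hT : #T ≤ K) (x : L) :
    ∃ k, x ∉ peeling Γ r (4 * ε * Fintype.card ι) T (k + 1) := by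
  refine ⟨#T, fun hx => ?_⟩
  have := two_pow_mul_card_peeling_lt Γ hε hbd hT #T ⟨x, hx⟩
  have := card_pos.2 ⟨x, hx⟩
  have := (#T).lt_two_pow_self
  rw [pow_succ] at *
  nlinarith

lemma level_lt_clog (hε : 0 ≤ ε) (hbd : BoundedRightDegree Γ r K ε) (hK : 2 ≤ K)
    {T : Finset L} (hT : #T ≤ K) {x : L} (hx : x ∈ T) :
    level Γ r (4 * ε * Fintype.card ι) T x < Nat.clog 2 K := by
  rcases h : level Γ r (4 * ε * Fintype.card ι) T x with _ | m
  · exact Nat.clog_pos one_lt_two hK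
  · have hmem := mem_peeling_level Γ r (4 * ε * Fintype.card ι) hx
    rw [h] at hmem
    have := two_pow_mul_card_peeling_lt Γ hε hbd hT m ⟨x, hmem⟩
    have := card_pos.2 ⟨x, hmem⟩
    refine (Nat.lt_clog_iff_pow_lt one_lt_two).2 ?_
    nlinarith

lemma le_card_assignment (hε : 0 ≤ ε) (hbd : BoundedRightDegree Γ r K ε) {S : List L}
    (hS : S.length ≤ K) {x : L} (hx : x ∈ S) :
    (1 - 4 * ε) * Fintype.card ι ≤ #(assignment Γ r (4 * ε * Fintype.card ι) S x) := by
  have hdeg := heavyDegree_peeling_level_le Γ r _ (mem_arrivals_self hx)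
    (exists_notMem_peeling Γ hε hbd ((card_arrivals_le S x).trans hS) x)
  have hsplit := congrArg (Nat.cast (R := ℝ))
    (card_assignment_add_heavyDegree Γ r (4 * ε * Fintype.card ι) hx)
  push_cast at hsplit
  linarith

lemma card_assignedTo_le (hε : 0 ≤ ε) (hbd : BoundedRightDegree Γ r K ε) (hK : 2 ≤ K)
    {S : List L} (hS : S.length ≤ K) (p : R) :
    #(assignedTo Γ r (4 * ε * Fintype.card ι) S p) ≤ 2 * Nat.clog 2 K * r :=
  calc _ ≤ 2 * r * #(range (Nat.clog 2 K)) :=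
        card_le_mul_card_image_of_maps_to (fun x hx => mem_range.2 <|
          level_lt_clog Γ hε hbd hK ((card_arrivals_le S x).trans hS)
            (mem_arrivals_self (List.mem_toFinset.1 (mem_filter.1 hx).1)))
          _ fun m _ => card_assignedTo_level_le Γ r _ S p m
    _ = 2 * Nat.clog 2 K * r := by rw [card_range]; ring

end BoundedRightDegree

end BipartiteGraph

theorem onlineMatching_of_boundedRightDegree_general
    {L R : Type*} [Fintype R] [DecidableEq L] [DecidableEq R]
    (D : ℕ) (Γ : L → Fin D → R) (r K : ℕ) (hK : 2 ≤ K)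
    (ε : ℝ) (hε : 0 < ε)
    (hbd : BoundedRightDegree Γ r K ε) :
    OnlineMatching Γ ((1 - 4 * ε) * (D : ℝ)) (2 * Nat.clog 2 K * r) K := by
  open BipartiteGraph in
  exact ⟨assignment Γ r (4 * ε * D),
    fun S hS x => ⟨assignment_of_notMem Γ r _, fun hx =>
      ⟨by simpa using le_card_assignment Γ hε.le hbd hS hx,
        fun S' _ hpre => assignment_eq_of_prefix Γ r _ hpre hx⟩⟩,
    fun S hS p => by
      rw [← coe_assignedTo, Set.ncard_coe_finset]
      simpa using card_assignedTo_le Γ hε.le hbd hK hS p⟩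

/-- **Bounded right degree ⇒ online matching.**
If `Γ : L × [D] → R` (with `D ≥ 1`) has `(r, K, ε)` bounded right degree, where
`r ≥ 1`, `ε > 0` and `K ≥ 2`, then `Γ` admits `((1−4ε)D, 2⌈log₂ K⌉·r)` online
matching up to size `K`. -/
theorem onlineMatching_of_boundedRightDegree
    {L R : Type*} [Fintype L] [Fintype R] [DecidableEq L] [DecidableEq R]
    (D : ℕ) (hD : 1 ≤ D) (Γ : L → Fin D → R) (r K : ℕ) (hr : 1 ≤ r) (hK : 2 ≤ K)
    (ε : ℝ) (hε : 0 < ε)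
    (hbd : BoundedRightDegree Γ r K ε) :
    OnlineMatching Γ ((1 - 4 * ε) * (D : ℝ)) (2 * Nat.clog 2 K * r) K :=
  onlineMatching_of_boundedRightDegree_general D Γ r K hK ε hε hbd
end

section
/- Let G be a bipartite graph Γ : L × [D] → R with finite left side L whose elements are labeled by distinct strings in {0,1}^n, with n ≥ 2, finite right side R and left degree D ≥ 1, let 0 < ε < 1 and let r ≥ 2 be an integer. If G admits (ℓ, r) online matching up to size K, then the graph G′ obtained from G by the G ↦ G′ transformation with parameters ε and r admits ((1−ε)·ℓ·t, 1) online matching up to size K, where t is the smallest power of two with t ≥ (1/ε)(n−1)(r−1) and t ≥ 2. -/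
open Finset

/-- The polynomial over a field `F` whose coefficients are the bits of `bits`
(each interpreted as `0` or `1` in `F`), evaluated at `a`. -/
noncomputable def polyEval {n : ℕ} {F : Type*} [Field F] (bits : Fin n → Bool) (a : F) : F :=
  ∑ j : Fin n, (if bits j then (1 : F) else 0) * a ^ (j : ℕ)

/-!
Serve each request `x` according to the prefix of the request list ending at its first
occurrence, so that its edges never change afterwards. For an edge `i` of `x`, at most `r - 1`
earlier-served nodes share its endpoint `p`; each of them is a distinct polynomial of degree
`< n`, so it agrees with `x` at no more than `n - 1` points. Keeping the edges `(i, a)` at all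
other points `a` loses at most `(r - 1)(n - 1) ≤ εt` of the `t` points, and no two nodes can
then reach the same `(p, x(a), a)`: the later one avoided every point where it collides with the
earlier one.
-/

section BitsPolynomial

open Polynomial

variable {F : Type*} [Field F] {n : ℕ}

noncomputable def bitsPoly (b : Fin n → Bool) : F[X] :=
  ∑ j : Fin n, C (if b j then 1 else 0) * X ^ (j : ℕ)

lemma eval_bitsPoly (b : Fin n → Bool) (a : F) : (bitsPoly b).eval a = polyEval b a := by
  simp only [bitsPoly, polyEval, eval_finsetSum, eval_mul, eval_C, eval_pow, eval_X]

lemma degree_bitsPoly_lt (b : Fin n → Bool) : (bitsPoly b : F[X]).degree < n :=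
  degree_sum_fin_lt _

lemma coeff_bitsPoly (b : Fin n → Bool) (j : Fin n) :
    (bitsPoly b : F[X]).coeff j = if b j then 1 else 0 := by
  simp only [bitsPoly, finsetSum_coeff, coeff_C_mul_X_pow, Fin.val_inj, sum_ite_eq, mem_univ,
    if_true]

lemma bitsPoly_injective : Function.Injective (bitsPoly : (Fin n → Bool) → F[X]) := by
  intro b b' h
  funext j
  have := congrArg (coeff · j) h
  simp only [coeff_bitsPoly] at this
  revert this
  cases b j <;> cases b' j <;> simp

theorem card_filter_polyEval_eq_le [Fintype F] [DecidableEq F] {b b' : Fin n → Bool}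
    (h : b ≠ b') : #{a : F | polyEval b a = polyEval b' a} ≤ n - 1 := by
  by_contra! hlt
  have hdeg (c : Fin n → Bool) :
      (bitsPoly c : F[X]).degree < #{a : F | polyEval b a = polyEval b' a} :=
    (degree_bitsPoly_lt c).trans_le (by exact_mod_cast (by omega : n ≤ _))
  refine h (bitsPoly_injective (eq_of_degrees_lt_of_eval_finset_eq _ (hdeg b) (hdeg b') ?_))
  intro a ha
  simpa [eval_bitsPoly] using ha

end BitsPolynomial

namespace List

variable {α : Type*} [BEq α]

def takeThrough (l : List α) (a : α) : List α :=
  l.take (l.idxOf a + 1)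

lemma takeThrough_prefix (l : List α) (a : α) : l.takeThrough a <+: l :=
  take_prefix _ _

variable [LawfulBEq α]

lemma mem_takeThrough {l : List α} {a : α} (h : a ∈ l) : a ∈ l.takeThrough a :=
  (mem_take_iff_idxOf_lt h).2 (Nat.lt_succ_self _)

lemma takeThrough_of_notMem {l : List α} {a : α} (h : a ∉ l) : l.takeThrough a = l := by
  simp [takeThrough, idxOf_of_notMem h]

lemma IsPrefix.takeThrough_eq {l₁ l₂ : List α} (hl : l₁ <+: l₂) {a : α} (ha : a ∈ l₁) :
    l₂.takeThrough a = l₁.takeThrough a := by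
  obtain ⟨l₃, rfl⟩ := hl
  rw [takeThrough, takeThrough, idxOf_append_of_mem ha,
    take_append_of_le_length (idxOf_lt_length_of_mem ha)]

end List

section HashExtend

variable {L ι R F V : Type*}

def hashExtend (Γ : L → ι → R) (h : L → F → V) (x : L) (q : ι × F) : R × V × F :=
  (Γ x q.1, h x q.2, q.2)

theorem card_le_card_filter_forall_ne_add [Fintype F] [DecidableEq V] (h : L → F → V)
    {x : L} {C : Finset L} {d : ℕ} (hd : ∀ y ∈ C, #{a | h y a = h x a} ≤ d) :
    Fintype.card F ≤ #{a | ∀ y ∈ C, h y a ≠ h x a} + #C * d := by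
  classical
  have hbad : #{a | ¬ ∀ y ∈ C, h y a ≠ h x a} ≤ #C * d := by
    refine le_trans (card_le_card ?_) (card_biUnion_le_card_mul C _ d hd)
    intro a ha
    simpa using ha
  rw [← card_univ, ← card_filter_add_card_filter_not (fun a => ∀ y ∈ C, h y a ≠ h x a)]
  omega

variable [DecidableEq L] (Γ : L → ι → R) (f : List L → L → Finset ι)

open Classical in
noncomputable def competitors (P : List L) (x : L) (i : ι) : Finset L :=
  {y ∈ P.toFinset | ∃ j ∈ f P y, Γ y j = Γ x i}.erase x

lemma card_competitors_le {P : List L} {x : L} {i : ι} {r : ℕ}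
    (hP : {y | y ∈ P ∧ ∃ j ∈ f P y, Γ y j = Γ x i}.ncard ≤ r) (hx : x ∈ P) (hi : i ∈ f P x) :
    #(competitors Γ f P x i) ≤ r - 1 := by
  rw [competitors, card_erase_of_mem (by simpa using ⟨hx, i, hi, rfl⟩)]
  refine Nat.sub_le_sub_right (le_of_eq_of_le ?_ hP) 1
  rw [← Set.ncard_coe_finset]
  congr 1
  ext y
  simp

variable [Fintype F] [DecidableEq V] (h : L → F → V)

noncomputable def freePoints (P : List L) (x : L) (i : ι) : Finset F :=
  {a | ∀ y ∈ competitors Γ f P x i, h y a ≠ h x a}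

open Classical in
noncomputable def liftMatching (S : List L) (x : L) : Finset (ι × F) :=
  {q ∈ f (S.takeThrough x) x ×ˢ univ | q.2 ∈ freePoints Γ f h (S.takeThrough x) x q.1}

lemma card_le_card_freePoints_add {P : List L} {x : L} {i : ι} {r d : ℕ}
    (hP : {y | y ∈ P ∧ ∃ j ∈ f P y, Γ y j = Γ x i}.ncard ≤ r) (hx : x ∈ P) (hi : i ∈ f P x)
    (hd : ∀ y, y ≠ x → #{a | h y a = h x a} ≤ d) :
    Fintype.card F ≤ #(freePoints Γ f h P x i) + (r - 1) * d := calc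
  Fintype.card F ≤ #(freePoints Γ f h P x i) + #(competitors Γ f P x i) * d :=
    card_le_card_filter_forall_ne_add h fun y hy => hd y (mem_erase.1 hy).1
  _ ≤ #(freePoints Γ f h P x i) + (r - 1) * d := by
    gcongr
    exact card_competitors_le Γ f hP hx hi

lemma card_liftMatching (S : List L) (x : L) :
    #(liftMatching Γ f h S x) =
      ∑ i ∈ f (S.takeThrough x) x, #(freePoints Γ f h (S.takeThrough x) x i) := by
  rw [liftMatching, card_filter, sum_product]
  refine sum_congr rfl fun i _ => ?_
  simp

lemma liftMatching_of_notMem {S : List L} {x : L} (hx : x ∉ S) (hf : f S x = ∅) :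
    liftMatching Γ f h S x = ∅ := by
  simp [liftMatching, List.takeThrough_of_notMem hx, hf]

lemma liftMatching_eq_of_prefix {S S' : List L} (hS : S <+: S') {x : L} (hx : x ∈ S) :
    liftMatching Γ f h S' x = liftMatching Γ f h S x := by
  rw [liftMatching, liftMatching, hS.takeThrough_eq hx]

lemma hashExtend_ne_of_takeThrough_prefix {S : List L} {x y : L} {q q' : ι × F} (hxy : x ≠ y)
    (hx : x ∈ S) (hpre : S.takeThrough x <+: S.takeThrough y)
    (hstable : f (S.takeThrough x) x = f (S.takeThrough y) x)
    (hq : q ∈ liftMatching Γ f h S x) (hq' : q' ∈ liftMatching Γ f h S y) :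
    hashExtend Γ h x q ≠ hashExtend Γ h y q' := by
  intro heq
  simp only [hashExtend, Prod.mk.injEq] at heq
  obtain ⟨hΓ, hh, ha⟩ := heq
  simp only [liftMatching, freePoints, mem_filter, mem_product, mem_univ, true_and] at hq hq'
  refine hq'.2 x ?_ (ha ▸ hh)
  simp only [competitors, mem_erase, mem_filter, List.mem_toFinset]
  exact ⟨hxy, hpre.subset (List.mem_takeThrough hx), q.1, hstable ▸ hq.1.1, hΓ⟩

end HashExtend

theorem OnlineMatching.hashExtend {L ι R F V : Type*} [Fintype F] [DecidableEq V]
    {Γ : L → ι → R} {h : L → F → V} {ℓ c : ℝ} {r K d : ℕ}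
    (hG : OnlineMatching Γ ℓ r K) (hd : ∀ x y, x ≠ y → #{a | h x a = h y a} ≤ d)
    (hc : 0 ≤ c) (hcF : c + ((r - 1) * d : ℕ) ≤ Fintype.card F) :
    OnlineMatching (hashExtend Γ h) (ℓ * c) 1 K := by
  classical
  obtain ⟨f, hf, hshare⟩ := hG
  have hlen {S : List L} (hS : S.length ≤ K) (x : L) : (S.takeThrough x).length ≤ K :=
    (S.takeThrough_prefix x).length_le.trans hS
  have hstable {S : List L} (hS : S.length ≤ K) {x y : L} (hx : x ∈ S)
      (hpre : S.takeThrough x <+: S.takeThrough y) :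
      f (S.takeThrough x) x = f (S.takeThrough y) x :=
    ((hf _ (hlen hS x) x).2 (List.mem_takeThrough hx)).2 _ (hlen hS y) hpre
  refine ⟨liftMatching Γ f h, fun S hS x => ⟨fun hx => ?_, fun hx => ⟨?_, fun S' _ hSS' => ?_⟩⟩,
    fun S hS p => ?_⟩
  · exact liftMatching_of_notMem Γ f h hx ((hf S hS x).1 hx)
  · set P := S.takeThrough x
    have hxP : x ∈ P := List.mem_takeThrough hx
    have hfree (i : ι) (hi : i ∈ f P x) : c ≤ #(freePoints Γ f h P x i) := by
      have : (Fintype.card F : ℝ) ≤ #(freePoints Γ f h P x i) + ((r - 1) * d : ℕ) := by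
        exact_mod_cast card_le_card_freePoints_add Γ f h (hshare P (hlen hS x) (Γ x i)) hxP hi
          fun y hy => hd y x hy
      linarith
    calc ℓ * c ≤ #(f P x) * c := mul_le_mul_of_nonneg_right ((hf P (hlen hS x) x).2 hxP).1 hc
      _ = ∑ i ∈ f P x, c := by rw [sum_const, nsmul_eq_mul]
      _ ≤ ∑ i ∈ f P x, (#(freePoints Γ f h P x i) : ℝ) := sum_le_sum hfree
      _ = #(liftMatching Γ f h S x) := by rw [card_liftMatching]; push_cast; rfl
  · exact (liftMatching_eq_of_prefix Γ f h hSS' hx).symm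
  · rw [Set.ncard_le_one_iff (S.finite_toSet.subset fun x hx => hx.1)]
    rintro x y ⟨hx, q, hq, rfl⟩ ⟨hy, q', hq', heq⟩
    by_contra hxy
    rcases List.prefix_or_prefix_of_prefix (S.takeThrough_prefix x) (S.takeThrough_prefix y)
      with hpre | hpre
    · exact hashExtend_ne_of_takeThrough_prefix Γ f h hxy hx hpre (hstable hS hx hpre) hq hq'
        heq.symm
    · exact hashExtend_ne_of_takeThrough_prefix Γ f h (Ne.symm hxy) hy hpre (hstable hS hy hpre)
        hq' hq heq

theorem gPrime_onlineMatching_general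
    {L R : Type*}
    (n : ℕ) (hn : 2 ≤ n) (D : ℕ) (Γ : L → Fin D → R)
    (lab : L → Fin n → Bool) (hlab : Function.Injective lab)
    (ε : ℝ) (hε0 : 0 < ε) (hε1 : ε < 1) (r : ℕ) (hr : 2 ≤ r)
    (ℓ : ℝ) (K : ℕ)
    (hG : OnlineMatching Γ ℓ r K)
    (s : ℕ) (hs : 1 ≤ s)
    (ht : (1 / ε) * ((n : ℝ) - 1) * ((r : ℝ) - 1) ≤ ((2 : ℝ) ^ s)) :
    OnlineMatching
      (fun (x : L) (q : Fin D × GaloisField 2 s) =>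
        ((Γ x q.1, polyEval (lab x) q.2, q.2) : R × GaloisField 2 s × GaloisField 2 s))
      ((1 - ε) * ℓ * ((2 : ℝ) ^ s)) 1 K := by
  classical
  let _ : Fintype (GaloisField 2 s) := Fintype.ofFinite _
  have hcard : (Fintype.card (GaloisField 2 s) : ℝ) = 2 ^ s := by
    rw [← Nat.card_eq_fintype_card, GaloisField.card 2 s (by omega)]
    norm_num
  have hsmall : ((n : ℝ) - 1) * ((r : ℝ) - 1) ≤ ε * 2 ^ s := by
    rw [mul_assoc, one_div_mul_eq_div, div_le_iff₀ hε0] at ht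
    linarith
  have hcF : (1 - ε) * 2 ^ s + ((r - 1) * (n - 1) : ℕ) ≤ Fintype.card (GaloisField 2 s) := by
    rw [hcard]
    push_cast [Nat.cast_sub (by omega : 1 ≤ r), Nat.cast_sub (by omega : 1 ≤ n)]
    linarith
  rw [show (1 - ε) * ℓ * 2 ^ s = ℓ * ((1 - ε) * 2 ^ s) by ring]
  exact hG.hashExtend (h := fun x => polyEval (lab x))
    (fun x y hxy => card_filter_polyEval_eq_le (hlab.ne hxy))
    (mul_nonneg (by linarith) (by positivity)) hcF

/-- **The `G ↦ G'` transformation preserves online matching while removing sharing.**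
Let `G` be a bipartite graph `Γ : L × [D] → R` whose left nodes are labeled by
distinct strings in `{0,1}^n` (`n ≥ 2`), let `0 < ε < 1` and let `r ≥ 2`. If `G`
admits `(ℓ, r)` online matching up to size `K`, then the graph `G'` (with right
side `R × 𝔽_t × 𝔽_t` and edges `Γ'(x,(i,a)) = (Γ(x,i), x(a), a)`, where
`t = 2^s` is the smallest power of two with `t ≥ (1/ε)(n−1)(r−1)` and `t ≥ 2`)
admits `((1−ε)·ℓ·t, 1)` online matching up to size `K`. -/
theorem gPrime_onlineMatching
    {L R : Type*} [Fintype L] [Fintype R]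
    (n : ℕ) (hn : 2 ≤ n) (D : ℕ) (hD : 1 ≤ D) (Γ : L → Fin D → R)
    (lab : L → Fin n → Bool) (hlab : Function.Injective lab)
    (ε : ℝ) (hε0 : 0 < ε) (hε1 : ε < 1) (r : ℕ) (hr : 2 ≤ r)
    (ℓ : ℝ) (K : ℕ)
    (hG : OnlineMatching Γ ℓ r K)
    (s : ℕ) (hs : 1 ≤ s)
    (ht : (1 / ε) * ((n : ℝ) - 1) * ((r : ℝ) - 1) ≤ ((2 : ℝ) ^ s))
    (hmin : ∀ s' : ℕ, 1 ≤ s' →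
      (1 / ε) * ((n : ℝ) - 1) * ((r : ℝ) - 1) ≤ ((2 : ℝ) ^ s') → s ≤ s') :
    OnlineMatching
      (fun (x : L) (q : Fin D × GaloisField 2 s) =>
        ((Γ x q.1, polyEval (lab x) q.2, q.2) : R × GaloisField 2 s × GaloisField 2 s))
      ((1 - ε) * ℓ * ((2 : ℝ) ^ s)) 1 K :=
  gPrime_onlineMatching_general n hn D Γ lab hlab ε hε0 hε1 r hr ℓ K hG s hs ht
end

section
/- Let C : {0,1}^n × {0,1}^d → {0,1}^m and let k_max ≤ n and e be nonnegative integers. Suppose C is a k →_ε (k+d−e) condenser for every nonnegative integer k ≤ k_max. Then m ≥ k_max + d − e, and in the graph corresponding to C, for every set S ⊆ {0,1}^n with |S| = 2^k for some nonnegative integer k ≤ k_max, one has excess_S(2^e) ≤ ε·2^d·|S|. -/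
/-
Feed the condenser the uniform distribution on `S`, with `|S| = 2^k`. The output puts mass
`|ℰ(S,p)| / (2^d |S|)` on `p`, while the promised `Q` puts at most `2^e / (2^d |S|)` there.
On the set `T` of right vertices with `|ℰ(S,p)| ≥ 2^e` the two therefore differ by at least
`excess_S(2^e) / (2^d |S|)`, and `ε`-closeness bounds this by `ε`. The bound on `m` is the
observation that a distribution on `2^m` points cannot have min-entropy above `m`.
-/

open Finset

/-- `P` is a probability distribution on the finite type `α`. -/
def IsDist {α : Type*} [Fintype α] (P : α → ℝ) : Prop :=
  (∀ a, 0 ≤ P a) ∧ ∑ a : α, P a = 1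

/-- `P` has min-entropy at least `k`: every point has probability at most `2^(−k)`. -/
noncomputable def MinEntropyGe {α : Type*} (P : α → ℝ) (k : ℝ) : Prop :=
  ∀ a, P a ≤ (2 : ℝ) ^ (-k)

/-- `P` and `Q` are `ε`-close: their statistical distance is at most `ε`. -/
def CloseDist {α : Type*} [Fintype α] (P Q : α → ℝ) (ε : ℝ) : Prop :=
  ∀ T : Finset α, |∑ a ∈ T, P a - ∑ a ∈ T, Q a| ≤ ε

/-- The distribution of `C(X, U_d)` where `X` has distribution `P` and `U_d` is
uniform on `{0,1}^d` and independent of `X`. -/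
noncomputable def outDist {n d m : ℕ} (C : (Fin n → Bool) → (Fin d → Bool) → (Fin m → Bool))
    (P : (Fin n → Bool) → ℝ) (y : Fin m → Bool) : ℝ :=
  ∑ x : Fin n → Bool, ∑ ρ : Fin d → Bool, if C x ρ = y then P x / 2 ^ d else 0

/-- `C` is a `k →_ε k'` condenser: for every distribution `X` on `{0,1}^n` with
min-entropy at least `k`, the distribution of `C(X, U_d)` is `ε`-close to some
distribution on `{0,1}^m` with min-entropy at least `k'`. -/
noncomputable def IsCondenser {n d m : ℕ}
    (C : (Fin n → Bool) → (Fin d → Bool) → (Fin m → Bool)) (k : ℝ) (ε : ℝ) (k' : ℝ) : Prop :=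
  ∀ P : (Fin n → Bool) → ℝ, IsDist P → MinEntropyGe P k →
    ∃ Q : (Fin m → Bool) → ℝ, IsDist Q ∧ MinEntropyGe Q k' ∧ CloseDist (outDist C P) Q ε

noncomputable def unifOn {α : Type*} [DecidableEq α] (S : Finset α) (a : α) : ℝ :=
  if a ∈ S then (#S : ℝ)⁻¹ else 0

theorem isDist_unifOn {α : Type*} [Fintype α] [DecidableEq α] {S : Finset α}
    (hS : S.Nonempty) : IsDist (unifOn S) := by
  refine ⟨fun a => by unfold unifOn; split <;> positivity, ?_⟩
  have hcard : (#S : ℝ) ≠ 0 := by exact_mod_cast hS.card_pos.ne'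
  simp [unifOn, sum_ite_mem, hcard]

theorem minEntropyGe_unifOn {α : Type*} [DecidableEq α] {S : Finset α} {k : ℕ}
    (hS : #S = 2 ^ k) : MinEntropyGe (unifOn S) k := by
  intro a
  rw [Real.rpow_neg zero_le_two, Real.rpow_natCast, unifOn]
  split
  · simp [hS]
  · positivity

theorem outDist_unifOn {n d m : ℕ} (C : (Fin n → Bool) → (Fin d → Bool) → (Fin m → Bool))
    (S : Finset (Fin n → Bool)) (y : Fin m → Bool) :
    outDist C (unifOn S) y = edgeCount C S y / (#S * 2 ^ d) := by
  have hterm : ∀ x ρ, (if C x ρ = y then unifOn S x / 2 ^ d else 0) =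
      if (x, ρ) ∈ (S ×ˢ univ).filter (fun q => C q.1 q.2 = y) then ((#S : ℝ) * 2 ^ d)⁻¹
      else 0 := by
    intro x ρ
    by_cases hx : x ∈ S <;> by_cases hy : C x ρ = y <;>
      simp [unifOn, hx, hy, div_eq_mul_inv, mul_comm]
  rw [outDist, sum_congr rfl fun x _ => sum_congr rfl fun ρ _ => hterm x ρ, ← sum_product',
    sum_ite_mem, univ_product_univ, univ_inter, sum_const, nsmul_eq_mul, edgeCount,
    div_eq_mul_inv]

theorem IsCondenser.exists_close_edgeCount {n d m : ℕ}
    {C : (Fin n → Bool) → (Fin d → Bool) → (Fin m → Bool)} {k : ℕ} {ε k' : ℝ}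
    (hC : IsCondenser C k ε k') {S : Finset (Fin n → Bool)} (hS : #S = 2 ^ k) :
    ∃ Q : (Fin m → Bool) → ℝ, IsDist Q ∧ MinEntropyGe Q k' ∧
      CloseDist (fun p => edgeCount C S p / (#S * 2 ^ d)) Q ε := by
  have hne : S.Nonempty := card_pos.mp (by rw [hS]; positivity)
  obtain ⟨Q, hQ, hQk, hclose⟩ := hC _ (isDist_unifOn hne) (minEntropyGe_unifOn hS)
  rw [show outDist C (unifOn S) = _ from funext (outDist_unifOn C S)] at hclose
  exact ⟨Q, hQ, hQk, hclose⟩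

theorem MinEntropyGe.two_rpow_le_card {α : Type*} [Fintype α] {Q : α → ℝ} {k : ℝ}
    (hQ : IsDist Q) (hQk : MinEntropyGe Q k) : (2 : ℝ) ^ k ≤ Fintype.card α := by
  have hmass : (1 : ℝ) ≤ Fintype.card α * (2 : ℝ) ^ (-k) := calc
    (1 : ℝ) = ∑ a, Q a := hQ.2.symm
    _ ≤ ∑ _a : α, (2 : ℝ) ^ (-k) := sum_le_sum fun a _ => hQk a
    _ = Fintype.card α * (2 : ℝ) ^ (-k) := by simp
  rwa [Real.rpow_neg zero_le_two, ← div_eq_mul_inv, one_le_div (by positivity)] at hmass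

theorem sum_tsub_le_of_closeDist {R : Type*} [Fintype R] (f : R → ℕ) (r : ℕ) {N ε : ℝ}
    (hN : 0 < N) {Q : R → ℝ} (hQ : ∀ p, Q p ≤ r / N)
    (hclose : CloseDist (fun p => f p / N) Q ε) :
    ((∑ p, (f p - r) : ℕ) : ℝ) ≤ ε * N := by
  classical
  set T := univ.filter fun p => r ≤ f p
  have hsum : ((∑ p, (f p - r) : ℕ) : ℝ) = ∑ p ∈ T, ((f p : ℝ) - r) := by
    rw [← sum_filter_of_ne (p := fun p => r ≤ f p) fun p _ h => by omega, Nat.cast_sum]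
    exact sum_congr rfl fun p hp => Nat.cast_sub (mem_filter.mp hp).2
  have hgap : ∑ p ∈ T, ((f p : ℝ) - r) / N ≤ ∑ p ∈ T, (f p : ℝ) / N - ∑ p ∈ T, Q p := by
    simp only [sub_div, sum_sub_distrib]
    gcongr with p
    exact hQ p
  rw [hsum, ← div_le_iff₀ hN, sum_div]
  exact hgap.trans ((le_abs_self _).trans (hclose T))

theorem two_rpow_neg_add_sub (k d e : ℕ) :
    (2 : ℝ) ^ (-((k : ℝ) + d - e)) = 2 ^ e / (2 ^ k * 2 ^ d) := by
  rw [show -((k : ℝ) + d - e) = e - (k + d) by ring, Real.rpow_sub two_pos,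
    Real.rpow_add two_pos]
  simp only [Real.rpow_natCast]

/-- **Condenser ⇒ bounded excess** (first half of the condenser / bounded right
degree equivalence). If `C : {0,1}^n × {0,1}^d → {0,1}^m` is a `k →_ε (k+d−e)`
condenser for every nonnegative integer `k ≤ k_max` (where `k_max ≤ n`), then
`m ≥ k_max + d − e` and, in the graph corresponding to `C`, every set
`S ⊆ {0,1}^n` of size `2^k` for some `k ≤ k_max` satisfies
`excess_S(2^e) ≤ ε·2^d·|S|`. -/
theorem condenser_implies_boundedExcess
    (n d m kmax e : ℕ) (hkmax : kmax ≤ n) (ε : ℝ)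
    (C : (Fin n → Bool) → (Fin d → Bool) → (Fin m → Bool))
    (hcond : ∀ k : ℕ, k ≤ kmax → IsCondenser C (k : ℝ) ε ((k : ℝ) + (d : ℝ) - (e : ℝ))) :
    kmax + d ≤ m + e ∧
    ∀ S : Finset (Fin n → Bool), (∃ k : ℕ, k ≤ kmax ∧ S.card = 2 ^ k) →
      (excess (fun x (ρ : Fin d → Bool) => C x ρ) S (2 ^ e) : ℝ) ≤
        ε * (2 : ℝ) ^ d * (S.card : ℝ) := by
  refine ⟨?_, ?_⟩
  · obtain ⟨S, -, hS⟩ := exists_subset_card_eq (s := (univ : Finset (Fin n → Bool)))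
      (n := 2 ^ kmax) (by simpa using Nat.pow_le_pow_right two_pos hkmax)
    obtain ⟨Q, hQ, hQk, -⟩ := (hcond kmax le_rfl).exists_close_edgeCount hS
    have h := hQk.two_rpow_le_card hQ
    rw [Fintype.card_fun, Fintype.card_bool, Fintype.card_fin, Nat.cast_pow, Nat.cast_ofNat,
      ← Real.rpow_natCast, Real.rpow_le_rpow_left_iff one_lt_two] at h
    exact_mod_cast (by linarith : (kmax : ℝ) + d ≤ m + e)
  · rintro S ⟨k, hk, hS⟩
    obtain ⟨Q, -, hQk, hclose⟩ := (hcond k hk).exists_close_edgeCount hS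
    have hQ : ∀ p, Q p ≤ ((2 ^ e : ℕ) : ℝ) / (#S * 2 ^ d) := fun p => by
      rw [hS]
      push_cast
      exact two_rpow_neg_add_sub k d e ▸ hQk p
    calc (excess (fun x (ρ : Fin d → Bool) => C x ρ) S (2 ^ e) : ℝ)
        ≤ ε * (#S * 2 ^ d) :=
          sum_tsub_le_of_closeDist _ _ (by rw [hS]; positivity) hQ hclose
      _ = ε * 2 ^ d * #S := by ring
end

section
/- Let C : {0,1}^n × {0,1}^d → {0,1}^m and let k_max ≤ n and e be nonnegative integers. Suppose the graph corresponding to C has (2^e, 2^{k_max}, ε) bounded right degree and m ≥ k_max + d − e. Then for every set S ⊆ {0,1}^n with |S| = 2^k for some nonnegative integer k ≤ k_max, there exists a function Γ′ : S × {0,1}^d → {0,1}^m such that the number of pairs (x,ρ) ∈ S × {0,1}^d with Γ′(x,ρ) ≠ C(x,ρ) is at most ε·2^d·|S|, and every p ∈ {0,1}^m satisfies Γ′(x,ρ) = p for at most 2^e pairs (x,ρ) ∈ S × {0,1}^d. (That is, one can redirect at most an ε fraction of the edges leaving S so that every right node has at most 2^e edges coming from S.) -/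
open Finset

/-!
Send every edge leaving `S` along `C` and view the result as a map from the `|S|·2^d` edges to
the `2^m` right nodes. Since `|S|·2^d ≤ 2^e·2^m`, while some right node receives more than `2^e`
edges another one receives fewer, and moving one edge from the first to the second lowers the
total excess `Σ_p max(|ℰ(S,p)| − 2^e, 0)` by one. Repeating until no node is overfull redirects
exactly as many edges as the initial excess, which bounded right degree bounds by `ε·2^d·|S|`.
-/

section Redistribution

variable {A R : Type*}

def overflow [Fintype R] [DecidableEq R] (E : Finset A) (g : A → R) (r : ℕ) : ℕ :=
  ∑ p : R, (#(E.filter fun x => g x = p) - r)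

lemma card_filter_update_add [DecidableEq A] [DecidableEq R] {E : Finset A} {a : A} (ha : a ∈ E)
    (g : A → R) (b q : R) :
    #(E.filter fun x => Function.update g a b x = q) + (if g a = q then 1 else 0) =
      #(E.filter fun x => g x = q) + (if b = q then 1 else 0) := by
  simp only [card_filter]
  rw [← add_sum_erase E _ ha, ← add_sum_erase E _ ha, Function.update_self,
    sum_congr rfl fun x hx => by rw [Function.update_of_ne (ne_of_mem_erase hx)]]
  ring

lemma exists_card_filter_lt [Fintype R] [DecidableEq R] {E : Finset A} {r : ℕ}
    (hE : #E ≤ r * Fintype.card R) (g : A → R) {p : R} (hp : r < #(E.filter fun x => g x = p)) :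
    ∃ p', #(E.filter fun x => g x = p') < r := by
  by_contra! h
  have : r * Fintype.card R < #E :=
    calc r * Fintype.card R = ∑ _q : R, r := by simp [mul_comm]
      _ < ∑ q : R, #(E.filter fun x => g x = q) :=
        sum_lt_sum (fun q _ => h q) ⟨p, mem_univ p, hp⟩
      _ = #E := (card_eq_sum_card_fiberwise fun x _ => mem_univ (g x)).symm
  omega

lemma overflow_update_lt [DecidableEq A] [Fintype R] [DecidableEq R] {E : Finset A} {g : A → R}
    {r : ℕ} {a : A} {p' : R} (ha : a ∈ E)
    (hover : r < #(E.filter fun x => g x = g a)) (hunder : #(E.filter fun x => g x = p') < r) :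
    overflow E (Function.update g a p') r < overflow E g r := by
  have hne : p' ≠ g a := by rintro rfl; omega
  refine sum_lt_sum (fun q _ => ?_) ⟨g a, mem_univ _, ?_⟩
  · have := card_filter_update_add ha g p' q
    by_cases hq : q = p'
    · subst hq; simp only [if_neg hne.symm, ↓reduceIte] at this; omega
    · by_cases hqa : g a = q <;> simp only [if_neg (Ne.symm hq), hqa] at this <;> omega
  · have := card_filter_update_add ha g p' (g a)
    simp only [if_neg hne, ↓reduceIte] at this
    omega

lemma exists_redirect_card_filter_le [DecidableEq A] [Fintype R] [DecidableEq R]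
    {E : Finset A} {r : ℕ} (hE : #E ≤ r * Fintype.card R) (g : A → R) :
    ∃ g' : A → R, #(E.filter fun x => g' x ≠ g x) ≤ overflow E g r ∧
      ∀ p, #(E.filter fun x => g' x = p) ≤ r := by
  induction hN : overflow E g r using Nat.strong_induction_on generalizing g with
  | _ N ih =>
  by_cases hfull : ∀ p, #(E.filter fun x => g x = p) ≤ r
  · exact ⟨g, by simp, hfull⟩
  obtain ⟨p, hp⟩ := not_forall.mp hfull
  rw [not_le] at hp
  obtain ⟨p', hp'⟩ := exists_card_filter_lt hE g hp
  obtain ⟨a, ha⟩ : (E.filter fun x => g x = p).Nonempty := card_pos.mp (by omega)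
  rw [mem_filter] at ha
  set g₁ := Function.update g a p' with hg₁
  have hlt : overflow E g₁ r < N := hN ▸ overflow_update_lt ha.1 (ha.2 ▸ hp) hp'
  obtain ⟨g', hchanged, hfib⟩ := ih _ hlt g₁ rfl
  refine ⟨g', ?_, hfib⟩
  have hsub : (E.filter fun x => g' x ≠ g x) ⊆ insert a (E.filter fun x => g' x ≠ g₁ x) := by
    intro x hx
    rw [mem_filter] at hx
    rcases eq_or_ne x a with rfl | hxa
    · exact mem_insert_self _ _
    · refine mem_insert_of_mem (mem_filter.mpr ⟨hx.1, ?_⟩)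
      rw [hg₁, Function.update_of_ne hxa]
      exact hx.2
  calc #(E.filter fun x => g' x ≠ g x) ≤ #(insert a (E.filter fun x => g' x ≠ g₁ x)) :=
        card_le_card hsub
    _ ≤ #(E.filter fun x => g' x ≠ g₁ x) + 1 := card_insert_le _ _
    _ ≤ N := by omega

end Redistribution

lemma excess_eq_overflow {L R ι : Type*} [DecidableEq L] [Fintype R] [DecidableEq R] [Fintype ι]
    (Γ : L → ι → R) (S : Finset L) (r : ℕ) :
    excess Γ S r = overflow (S ×ˢ univ) (fun q => Γ q.1 q.2) r :=
  rfl

theorem redirect_edges_general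
    (n d m kmax e : ℕ) (ε : ℝ)
    (C : (Fin n → Bool) → (Fin d → Bool) → (Fin m → Bool))
    (hbd : BoundedRightDegree (fun x (ρ : Fin d → Bool) => C x ρ) (2 ^ e) (2 ^ kmax) ε)
    (hm : kmax + d ≤ m + e) :
    ∀ S : Finset (Fin n → Bool), (∃ k : ℕ, k ≤ kmax ∧ S.card = 2 ^ k) →
      ∃ Γ' : (Fin n → Bool) → (Fin d → Bool) → (Fin m → Bool),
        (((S ×ˢ (Finset.univ : Finset (Fin d → Bool))).filter
            (fun q => Γ' q.1 q.2 ≠ C q.1 q.2)).card : ℝ) ≤ ε * (2 : ℝ) ^ d * (S.card : ℝ) ∧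
        ∀ p : Fin m → Bool,
          ((S ×ˢ (Finset.univ : Finset (Fin d → Bool))).filter
            (fun q => Γ' q.1 q.2 = p)).card ≤ 2 ^ e := by
  rintro S ⟨k, hk, hS⟩
  have hroom : #(S ×ˢ (univ : Finset (Fin d → Bool))) ≤ 2 ^ e * Fintype.card (Fin m → Bool) := by
    simp only [card_product, card_univ, Fintype.card_fun, Fintype.card_bool, Fintype.card_fin, hS,
      ← pow_add]
    exact Nat.pow_le_pow_right two_pos (by omega)
  obtain ⟨g, hchanged, hfib⟩ := exists_redirect_card_filter_le hroom fun q => C q.1 q.2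
  refine ⟨fun x ρ => g (x, ρ), ?_, hfib⟩
  have hexcess := hbd S (hS ▸ Nat.pow_le_pow_right two_pos hk)
  rw [excess_eq_overflow] at hexcess
  simp only [Fintype.card_fun, Fintype.card_bool, Fintype.card_fin, Nat.cast_pow,
    Nat.cast_ofNat] at hexcess
  exact le_trans (by exact_mod_cast hchanged) hexcess

/-- **Edge redirection claim.** If the graph corresponding to
`C : {0,1}^n × {0,1}^d → {0,1}^m` has `(2^e, 2^{k_max}, ε)` bounded right degree
and `m ≥ k_max + d − e`, then for every `S ⊆ {0,1}^n` with `|S| = 2^k` for some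
`k ≤ k_max`, one can redirect at most `ε·2^d·|S|` of the edges leaving `S` so that
every right node has at most `2^e` edges coming from `S`. -/
theorem redirect_edges
    (n d m kmax e : ℕ) (hkmax : kmax ≤ n) (ε : ℝ)
    (C : (Fin n → Bool) → (Fin d → Bool) → (Fin m → Bool))
    (hbd : BoundedRightDegree (fun x (ρ : Fin d → Bool) => C x ρ) (2 ^ e) (2 ^ kmax) ε)
    (hm : kmax + d ≤ m + e) :
    ∀ S : Finset (Fin n → Bool), (∃ k : ℕ, k ≤ kmax ∧ S.card = 2 ^ k) →
      ∃ Γ' : (Fin n → Bool) → (Fin d → Bool) → (Fin m → Bool),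
        (((S ×ˢ (Finset.univ : Finset (Fin d → Bool))).filter
            (fun q => Γ' q.1 q.2 ≠ C q.1 q.2)).card : ℝ) ≤ ε * (2 : ℝ) ^ d * (S.card : ℝ) ∧
        ∀ p : Fin m → Bool,
          ((S ×ˢ (Finset.univ : Finset (Fin d → Bool))).filter
            (fun q => Γ' q.1 q.2 = p)).card ≤ 2 ^ e :=
  redirect_edges_general n d m kmax e ε C hbd hm
end

section
/- Let C : {0,1}^n × {0,1}^d → {0,1}^m and let k_max ≤ n and e be nonnegative integers, and let ε ≥ 0. If the graph corresponding to C has (2^e, 2^{k_max}, ε) bounded right degree and m ≥ k_max + d − e, then C is a k →_ε (k+d−e) condenser for every nonnegative integer k ≤ k_max. -/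
/-!
A distribution `P` of min-entropy `k` gives the point `2^k • P` of the hypersimplex
`{w | 0 ≤ w ≤ 1, ∑ w = 2^k}`, which by Birkhoff's theorem is the convex hull of the indicators
of `2^k`-sets. The mass of `C(X, U_d)` above `τ = 2^{-(k+d-e)}` is a convex function of that
point, and at the indicator of `S` it is `excess_S(2^e) / (2^k 2^d) ≤ ε`. Capping the output
distribution at `τ` and pouring the mass above the cap into the room below it (there is room
since `2^m τ ≥ 1`) gives a distribution of min-entropy `k + d - e` within distance `ε`.
-/

open Finset

def hypersimplex (α : Type*) [Fintype α] (M : ℕ) : Set (α → ℝ) :=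
  {w | (∀ x, 0 ≤ w x) ∧ (∀ x, w x ≤ 1) ∧ ∑ x, w x = M}

section hypersimplex

variable {α : Type*} [Fintype α] {M : ℕ} {w : α → ℝ}

lemma le_card_of_mem_hypersimplex (hw : w ∈ hypersimplex α M) : M ≤ Fintype.card α := by
  have : (M : ℝ) ≤ Fintype.card α := by
    rw [← hw.2.2, Fintype.card_eq_sum_ones, Nat.cast_sum, Nat.cast_one]
    exact sum_le_sum fun x _ => hw.2.1 x
  exact_mod_cast this

lemma le_of_mem_hypersimplex (hw : w ∈ hypersimplex α M) (x : α) : w x ≤ M :=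
  hw.2.2 ▸ single_le_sum (fun y _ => hw.1 y) (mem_univ x)

lemma one_sub_le_of_mem_hypersimplex (hw : w ∈ hypersimplex α M) (x : α) :
    1 - w x ≤ Fintype.card α - M := by
  rw [← hw.2.2, Fintype.card_eq_sum_ones, Nat.cast_sum, Nat.cast_one, ← sum_sub_distrib]
  exact single_le_sum (f := fun y => 1 - w y) (fun y _ => sub_nonneg.2 (hw.2.1 y)) (mem_univ x)

variable [DecidableEq α]

noncomputable def spreadMatrix (w : α → ℝ) (S : Finset α) : Matrix α α ℝ :=
  fun i x => if i ∈ S then w x / #S else (1 - w x) / (Fintype.card α - #S)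

lemma spreadMatrix_mem_doublyStochastic {S : Finset α} (hw : w ∈ hypersimplex α #S) :
    spreadMatrix w S ∈ doublyStochastic ℝ α := by
  have mul_div_cancel_of_le {a c : ℝ} (ha : 0 ≤ a) (hac : a ≤ c) : c * (a / c) = a :=
    mul_div_cancel_of_imp' fun hc => le_antisymm (hc ▸ hac) ha
  refine mem_doublyStochastic_iff_sum.2 ⟨fun i x => ?_, fun i => ?_, fun x => ?_⟩
  · unfold spreadMatrix
    split_ifs
    · exact div_nonneg (hw.1 x) (Nat.cast_nonneg _)
    · exact div_nonneg (sub_nonneg.2 (hw.2.1 x))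
        (sub_nonneg.2 (by exact_mod_cast card_le_univ S))
  · unfold spreadMatrix
    split_ifs with hi
    · rw [← sum_div, hw.2.2, div_self]
      exact_mod_cast (card_pos.2 ⟨i, hi⟩).ne'
    · rw [← sum_div, sum_sub_distrib, hw.2.2, sum_const, card_univ, nsmul_one, div_self]
      exact sub_ne_zero.2 (by exact_mod_cast (card_lt_univ_of_notMem hi).ne')
  · simp only [spreadMatrix]
    rw [sum_ite, sum_const, sum_const, nsmul_eq_mul, nsmul_eq_mul, filter_not,
      filter_mem_eq_inter, univ_inter, card_sdiff_of_subset (subset_univ _), card_univ,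
      Nat.cast_sub (card_le_univ S), mul_div_cancel_of_le (hw.1 x) (le_of_mem_hypersimplex hw x),
      mul_div_cancel_of_le (sub_nonneg.2 (hw.2.1 x)) (one_sub_le_of_mem_hypersimplex hw x)]
    ring

/-- Summing the rows in `S` turns a permutation matrix into the indicator of an `#S`-set and
`spreadMatrix w S` into `w`, so Birkhoff's theorem applies. -/
lemma hypersimplex_subset_convexHull (M : ℕ) :
    hypersimplex α M ⊆
      convexHull ℝ {v | ∃ S : Finset α, #S = M ∧ (S : Set α).indicator 1 = v} := by
  intro w hw
  obtain ⟨S, -, rfl⟩ := exists_subset_card_eq (le_card_of_mem_hypersimplex hw)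
  let rowSum : Matrix α α ℝ →ₗ[ℝ] α → ℝ :=
    { toFun := fun A x => ∑ i ∈ S, A i x
      map_add' := fun A B => by ext; simp [sum_add_distrib]
      map_smul' := fun c A => by ext; simp [mul_sum] }
  have hw_eq : rowSum (spreadMatrix w S) = w := by
    ext x
    simp only [rowSum, LinearMap.coe_mk, AddHom.coe_mk, spreadMatrix]
    rw [sum_ite_of_true fun i hi => hi, sum_const, nsmul_eq_mul,
      mul_div_cancel_of_imp' fun h => le_antisymm (h ▸ le_of_mem_hypersimplex hw x) (hw.1 x)]
  have hperm (σ : Equiv.Perm α) :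
      rowSum (σ.permMatrix ℝ) = (S.map σ.toEmbedding : Set α).indicator 1 := by
    ext x
    simp only [rowSum, LinearMap.coe_mk, AddHom.coe_mk, PEquiv.toMatrix_apply,
      Equiv.toPEquiv_apply, Option.mem_def, Option.some.injEq, ← Equiv.eq_symm_apply, sum_ite_eq',
      coe_map, Function.Embedding.coeFn_mk, Equiv.image_eq_preimage_symm]
    by_cases h : σ.symm x ∈ S <;> simp [h]
  have hA := (doublyStochastic_eq_convexHull_permMatrix (R := ℝ) (n := α)).subset
    (spreadMatrix_mem_doublyStochastic hw)
  rw [← hw_eq]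
  refine convexHull_mono ?_ (rowSum.image_convexHull _ ▸ Set.mem_image_of_mem rowSum hA)
  rintro _ ⟨_, ⟨σ, rfl⟩, rfl⟩
  exact ⟨_, card_map _, (hperm σ).symm⟩

end hypersimplex

def massAbove {β : Type*} [Fintype β] (μ : β → ℝ) (τ : ℝ) : ℝ := ∑ y, max (μ y - τ) 0

section massAbove

variable {β : Type*} [Fintype β]

lemma convexOn_massAbove (τ : ℝ) : ConvexOn ℝ Set.univ fun μ : β → ℝ => massAbove μ τ := by
  refine ⟨convex_univ, fun μ _ ν _ a b ha hb hab => ?_⟩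
  simp only [massAbove, Pi.add_apply, Pi.smul_apply, smul_eq_mul, mul_sum, ← sum_add_distrib]
  refine sum_le_sum fun y _ => max_le ?_ (by positivity)
  calc a * μ y + b * ν y - τ = a * (μ y - τ) + b * (ν y - τ) := by linear_combination τ * hab
    _ ≤ _ := by gcongr <;> exact le_max_left _ _

lemma massAbove_smul (μ : β → ℝ) (τ : ℝ) {c : ℝ} (hc : 0 ≤ c) :
    massAbove (c • μ) (c * τ) = c * massAbove μ τ := by
  simp only [massAbove, mul_sum, Pi.smul_apply, smul_eq_mul, ← mul_sub, mul_max_of_nonneg _ _ hc,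
    mul_zero]

lemma natCast_sub_eq_max (a b : ℕ) : ((a - b : ℕ) : ℝ) = max ((a : ℝ) - b) 0 := by
  rcases le_total b a with h | h
  · rw [Nat.cast_sub h, max_eq_left (sub_nonneg.2 (by exact_mod_cast h))]
  · rw [Nat.sub_eq_zero_of_le h, max_eq_right (sub_nonpos.2 (by exact_mod_cast h)), Nat.cast_zero]

end massAbove

section Graph

open Matrix

variable {L R ι : Type*} [DecidableEq R] [Fintype ι]

def biadjacencyMatrix (Γ : L → ι → R) : Matrix L R ℝ := fun x p => #{i | Γ x i = p}

lemma sum_biadjacencyMatrix_apply [Fintype R] (Γ : L → ι → R) (x : L) :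
    ∑ p, biadjacencyMatrix Γ x p = Fintype.card ι := by
  simp only [biadjacencyMatrix]
  exact_mod_cast (card_eq_sum_card_fiberwise fun i _ => mem_univ (Γ x i)).symm

variable [DecidableEq L]

lemma edgeCount_eq_sum (Γ : L → ι → R) (S : Finset L) (p : R) :
    edgeCount Γ S p = ∑ x ∈ S, #{i | Γ x i = p} := by
  rw [edgeCount, card_filter, sum_product]
  exact sum_congr rfl fun x _ => (card_filter _ _).symm

variable [Fintype L] [Fintype R]

lemma excess_eq_massAbove (Γ : L → ι → R) (S : Finset L) (r : ℕ) :
    (excess Γ S r : ℝ) = massAbove ((S : Set L).indicator 1 ᵥ* biadjacencyMatrix Γ) r := by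
  simp only [excess, massAbove, Nat.cast_sum, natCast_sub_eq_max, edgeCount_eq_sum]
  refine sum_congr rfl fun p _ => ?_
  simp [vecMul, dotProduct, biadjacencyMatrix, Set.indicator_apply]

/-- The excess is convex in the weights, so its bound on `M`-sets extends to their convex hull. -/
lemma BoundedRightDegree.massAbove_vecMul_le {Γ : L → ι → R} {r K : ℕ} {ε : ℝ}
    (hbd : BoundedRightDegree Γ r K ε) {M : ℕ} (hM : M ≤ K) {w : L → ℝ}
    (hw : w ∈ hypersimplex L M) :
    massAbove (w ᵥ* biadjacencyMatrix Γ) r ≤ ε * Fintype.card ι * M := by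
  obtain ⟨_, ⟨S, rfl, rfl⟩, hle⟩ :=
    ((convexOn_massAbove (r : ℝ)).comp_linearMap (biadjacencyMatrix Γ).vecMulLinear
      ).exists_ge_of_mem_convexHull (Set.subset_univ _) (hypersimplex_subset_convexHull M hw)
  calc _ ≤ _ := hle
    _ = excess Γ S r := (excess_eq_massAbove Γ S r).symm
    _ ≤ _ := hbd S hM

end Graph

section Distribution

variable {α β : Type*} [Fintype α] [Fintype β]

lemma CloseDist.mono {P Q : α → ℝ} {ε ε' : ℝ} (h : CloseDist P Q ε) (hε : ε ≤ ε') :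
    CloseDist P Q ε' :=
  fun T => (h T).trans hε

lemma closeDist_of_sub_le {P Q a b : α → ℝ} {ε : ℝ} (ha : ∀ y, 0 ≤ a y) (hb : ∀ y, 0 ≤ b y)
    (hPQ : ∀ y, P y - Q y ≤ a y) (hQP : ∀ y, Q y - P y ≤ b y)
    (hεa : ∑ y, a y ≤ ε) (hεb : ∑ y, b y ≤ ε) : CloseDist P Q ε := by
  intro T
  rw [abs_sub_le_iff, ← sum_sub_distrib, ← sum_sub_distrib]
  exact ⟨(sum_le_sum fun y _ => hPQ y).trans <|
      (sum_le_sum_of_subset_of_nonneg (subset_univ T) fun y _ _ => ha y).trans hεa,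
    (sum_le_sum fun y _ => hQP y).trans <|
      (sum_le_sum_of_subset_of_nonneg (subset_univ T) fun y _ _ => hb y).trans hεb⟩

lemma two_pow_smul_mem_hypersimplex {P : α → ℝ} {k : ℕ} (hP : IsDist P)
    (hmin : MinEntropyGe P k) : (2 ^ k : ℝ) • P ∈ hypersimplex α (2 ^ k) := by
  refine ⟨fun x => mul_nonneg (by positivity) (hP.1 x), fun x => ?_, ?_⟩
  · have hx : P x ≤ ((2 : ℝ) ^ k)⁻¹ := by
      simpa [Real.rpow_neg, Real.rpow_natCast] using hmin x
    calc (2 ^ k : ℝ) * P x ≤ 2 ^ k * (2 ^ k)⁻¹ := by gcongr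
      _ = 1 := mul_inv_cancel₀ (by positivity)
  · simp [← mul_sum, hP.2]

/-- Cap `μ` at `τ` and pour the mass above the cap back, proportionally, into the room
left below it. -/
lemma exists_isDist_le_closeDist_massAbove {μ : β → ℝ} (hμ : IsDist μ) {τ : ℝ} (hτ : 0 ≤ τ)
    (hcap : 1 ≤ Fintype.card β * τ) :
    ∃ Q : β → ℝ, IsDist Q ∧ (∀ y, Q y ≤ τ) ∧ CloseDist μ Q (massAbove μ τ) := by
  set E := massAbove μ τ
  set room := ∑ y, (τ - min (μ y) τ)
  have hsplit (y : β) : min (μ y) τ + max (μ y - τ) 0 = μ y := by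
    rcases le_total (μ y) τ with h | h <;> simp [h]
  have hmass : ∑ y, min (μ y) τ + E = 1 := by
    simp only [E, massAbove, ← sum_add_distrib, hsplit, hμ.2]
  have hroom : room = Fintype.card β * τ - 1 + E := by
    simp only [room, sum_sub_distrib, sum_const, card_univ, nsmul_eq_mul]
    linarith
  have hE : 0 ≤ E := sum_nonneg fun y _ => le_max_right _ _
  have hgap (y : β) : 0 ≤ τ - min (μ y) τ := sub_nonneg.2 (min_le_right _ _)
  set q := E / room
  have hq0 : 0 ≤ q := div_nonneg hE (by linarith)
  have hq1 : q ≤ 1 := div_le_one_of_le₀ (by linarith) (by linarith)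
  have hqroom : q * room = E := by
    rcases eq_or_ne room 0 with h | h
    · simp only [q, h, mul_zero]; linarith
    · exact div_mul_cancel₀ E h
  refine ⟨fun y => min (μ y) τ + q * (τ - min (μ y) τ),
    ⟨fun y => add_nonneg (le_min (hμ.1 y) hτ) (mul_nonneg hq0 (hgap y)), ?_⟩,
    fun y => by nlinarith [hgap y], ?_⟩
  · rw [sum_add_distrib, ← mul_sum, hqroom, hmass]
  · refine closeDist_of_sub_le (fun y => le_max_right _ _) (fun y => mul_nonneg hq0 (hgap y))
      (fun y => ?_) (fun y => ?_) le_rfl (by rw [← mul_sum, hqroom])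
    · linarith [hsplit y, mul_nonneg hq0 (hgap y)]
    · linarith [hsplit y, le_max_right (μ y - τ) 0]

end Distribution

section Condenser

open Matrix

variable {n d m : ℕ} {P : (Fin n → Bool) → ℝ}

lemma outDist_eq_smul_vecMul (C : (Fin n → Bool) → (Fin d → Bool) → (Fin m → Bool))
    (P : (Fin n → Bool) → ℝ) :
    outDist C P = (2 ^ d : ℝ)⁻¹ • (P ᵥ* biadjacencyMatrix C) := by
  ext y
  simp only [outDist, Pi.smul_apply, smul_eq_mul, vecMul, dotProduct, biadjacencyMatrix, mul_sum]
  refine sum_congr rfl fun x _ => ?_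
  rw [← sum_filter, sum_const, nsmul_eq_mul]
  ring

lemma isDist_outDist (C : (Fin n → Bool) → (Fin d → Bool) → (Fin m → Bool)) (hP : IsDist P) :
    IsDist (outDist C P) := by
  refine ⟨fun y => sum_nonneg fun x _ => sum_nonneg fun ρ _ => ?_, ?_⟩
  · split_ifs
    · exact div_nonneg (hP.1 x) (by positivity)
    · exact le_rfl
  · simp only [outDist_eq_smul_vecMul, Pi.smul_apply, smul_eq_mul, ← mul_sum, vecMul,
      dotProduct]
    rw [sum_comm]
    simp [← mul_sum, sum_biadjacencyMatrix_apply, ← sum_mul, hP.2]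

lemma BoundedRightDegree.massAbove_outDist_le
    {C : (Fin n → Bool) → (Fin d → Bool) → (Fin m → Bool)} {e K k : ℕ} {ε : ℝ}
    (hbd : BoundedRightDegree (fun x (ρ : Fin d → Bool) => C x ρ) (2 ^ e) K ε)
    (hk : 2 ^ k ≤ K) (hP : IsDist P) (hmin : MinEntropyGe P k) :
    massAbove (outDist C P) (2 ^ e / (2 ^ k * 2 ^ d)) ≤ ε := by
  have hc : (0 : ℝ) ≤ (2 ^ k * 2 ^ d)⁻¹ := by positivity
  have h := hbd.massAbove_vecMul_le hk (two_pow_smul_mem_hypersimplex hP hmin)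
  calc massAbove (outDist C P) (2 ^ e / (2 ^ k * 2 ^ d))
      = (2 ^ k * 2 ^ d)⁻¹ * massAbove (((2 : ℝ) ^ k • P) ᵥ* biadjacencyMatrix C) (2 ^ e : ℕ) := by
        rw [← massAbove_smul _ _ hc, outDist_eq_smul_vecMul, smul_vecMul, smul_smul]
        congr 1
        · field_simp
        · push_cast; field_simp
    _ ≤ (2 ^ k * 2 ^ d)⁻¹ * (ε * 2 ^ d * 2 ^ k) := by gcongr; simpa using h
    _ = ε := by field_simp

end Condenser

theorem condenser_of_boundedRightDegree_general
    (n d m kmax e : ℕ) (ε : ℝ)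
    (C : (Fin n → Bool) → (Fin d → Bool) → (Fin m → Bool))
    (hbd : BoundedRightDegree (fun x (ρ : Fin d → Bool) => C x ρ) (2 ^ e) (2 ^ kmax) ε)
    (hm : kmax + d ≤ m + e) :
    ∀ k : ℕ, k ≤ kmax → IsCondenser C (k : ℝ) ε ((k : ℝ) + (d : ℝ) - (e : ℝ)) := by
  intro k hk P hP hmin
  set τ : ℝ := 2 ^ e / (2 ^ k * 2 ^ d)
  have hτ : (2 : ℝ) ^ (-((k : ℝ) + d - e)) = τ := by
    rw [neg_sub, Real.rpow_sub two_pos, Real.rpow_add two_pos]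
    simp only [Real.rpow_natCast]
    rfl
  have hcap : 1 ≤ (Fintype.card (Fin m → Bool) : ℝ) * τ := by
    rw [Fintype.card_fun, Fintype.card_bool, Fintype.card_fin, Nat.cast_pow, Nat.cast_ofNat,
      mul_div_assoc', one_le_div (by positivity), ← pow_add, ← pow_add]
    exact pow_le_pow_right₀ one_le_two (by omega)
  obtain ⟨Q, hQ, hQτ, hclose⟩ :=
    exists_isDist_le_closeDist_massAbove (isDist_outDist C hP) (by positivity) hcap
  exact ⟨Q, hQ, fun y => hτ ▸ hQτ y,
    hclose.mono (hbd.massAbove_outDist_le (Nat.pow_le_pow_right two_pos hk) hP hmin)⟩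

/-- **Bounded right degree ⇒ condenser** (second half of the condenser / bounded
right degree equivalence). If the graph corresponding to
`C : {0,1}^n × {0,1}^d → {0,1}^m` has `(2^e, 2^{k_max}, ε)` bounded right degree
(`ε ≥ 0`) and `m ≥ k_max + d − e`, then `C` is a `k →_ε (k+d−e)` condenser for
every nonnegative integer `k ≤ k_max`. -/
theorem condenser_of_boundedRightDegree
    (n d m kmax e : ℕ) (hkmax : kmax ≤ n) (ε : ℝ) (hε : 0 ≤ ε)
    (C : (Fin n → Bool) → (Fin d → Bool) → (Fin m → Bool))
    (hbd : BoundedRightDegree (fun x (ρ : Fin d → Bool) => C x ρ) (2 ^ e) (2 ^ kmax) ε)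
    (hm : kmax + d ≤ m + e) :
    ∀ k : ℕ, k ≤ kmax → IsCondenser C (k : ℝ) ε ((k : ℝ) + (d : ℝ) - (e : ℝ)) :=
  condenser_of_boundedRightDegree_general n d m kmax e ε C hbd hm
end

section
/- Let Γ : L × [D] → R be a bipartite graph with finite left side L, finite right side R and left degree D ≥ 1 that is a (K_max, (1−ε)D) expander, where ε > 0 and K_max ≥ 2. Then the graph admits ((1−4ε)D, 2⌈log₂ K_max⌉) online matching up to size K_max. -/
open Finset

/-!
Requests are served greedily in order of first arrival. A new node goes to the lowest level at
which at most `2εD` of its edges end in right nodes already used at that level, and keeps its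
other edges; so at every level each right node is used at most once, and every node keeps at
least `(1 - 2ε)D` edges. A node above level `j` lost more than `2εD` edges to nodes of level `j`;
since those edges add nothing to the neighborhood of the nodes of level `≥ j`, the `(1 - ε)D`
expansion of that set allows fewer than half of its nodes to lie above level `j`. Hence all
levels are below `⌈log₂ K_max⌉`, which bounds the number of nodes sharing a right node.
-/

section Neighbors

variable {L R ι : Type*} [DecidableEq R] [Fintype ι] (Γ : L → ι → R)

def neighbors (S : Finset L) : Finset R := (S ×ˢ univ).image fun q => Γ q.1 q.2

lemma mem_neighbors {S : Finset L} {p : R} : p ∈ neighbors Γ S ↔ ∃ x ∈ S, ∃ i, Γ x i = p := by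
  simp [neighbors]

lemma card_neighbors_le (S : Finset L) : #(neighbors Γ S) ≤ #S * Fintype.card ι :=
  card_image_le.trans (by rw [card_product, card_univ])

/-- The edges of `A` that land in the neighborhood of `T \ A` add nothing to that of `T`. -/
lemma card_neighbors_add_sum_le [DecidableEq L] {A T : Finset L} (hAT : A ⊆ T) :
    #(neighbors Γ T) + ∑ x ∈ A, #{i | Γ x i ∈ neighbors Γ (T \ A)} ≤ #T * Fintype.card ι := by
  set old := neighbors Γ (T \ A)
  have hcover : neighbors Γ T ⊆ old ∪ A.biUnion fun x => image (Γ x) {i | Γ x i ∉ old} := by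
    intro p hp
    obtain ⟨x, hx, i, rfl⟩ := (mem_neighbors Γ).1 hp
    by_cases hxA : x ∈ A
    · by_cases hold : Γ x i ∈ old
      · exact mem_union_left _ hold
      · exact mem_union_right _ (mem_biUnion.2 ⟨x, hxA, mem_image_of_mem _ (by simpa using hold)⟩)
    · exact mem_union_left _ ((mem_neighbors Γ).2 ⟨x, mem_sdiff.2 ⟨hx, hxA⟩, i, rfl⟩)
  have hsplit : ∑ x ∈ A, (#{i | Γ x i ∈ old} + #{i | Γ x i ∉ old}) = #A * Fintype.card ι := by
    rw [sum_congr rfl fun x _ => card_filter_add_card_filter_not _, sum_const, card_univ,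
      smul_eq_mul]
  have hfresh : #(A.biUnion fun x => image (Γ x) {i | Γ x i ∉ old}) ≤ ∑ x ∈ A, #{i | Γ x i ∉ old} :=
    card_biUnion_le.trans (sum_le_sum fun x _ => card_image_le)
  have hsize : #T = #(T \ A) + #A := (card_sdiff_add_card_eq_card hAT).symm
  have hcard_cover := card_le_card hcover
  have hcard_union := card_union_le old (A.biUnion fun x => image (Γ x) {i | Γ x i ∉ old})
  have hcard_old : #old ≤ #(T \ A) * Fintype.card ι := card_neighbors_le Γ (T \ A)
  rw [sum_add_distrib] at hsplit
  rw [hsize, add_mul]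
  omega

lemma two_mul_card_lt_of_expander [DecidableEq L] {K t : ℕ} {ε : ℝ} (hε : 0 ≤ ε)
    (hexp : Expander Γ K ((1 - ε) * Fintype.card ι)) (ht : 2 * ε * Fintype.card ι < t + 1)
    {A T : Finset L} (hAT : A ⊆ T) (hTK : #T ≤ K) (hA : A.Nonempty)
    (hwasted : ∀ x ∈ A, t < #{i | Γ x i ∈ neighbors Γ (T \ A)}) : 2 * #A < #T := by
  set n : ℝ := (Fintype.card ι : ℝ)
  have hcount : (#(neighbors Γ T) : ℝ) + ∑ x ∈ A, (#{i | Γ x i ∈ neighbors Γ (T \ A)} : ℝ)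
      ≤ #T * n := by
    simpa only [n, ← Nat.cast_sum, ← Nat.cast_add, ← Nat.cast_mul, Nat.cast_le]
      using card_neighbors_add_sum_le Γ hAT
  have hwasted' : (#A : ℝ) * (t + 1) ≤ ∑ x ∈ A, (#{i | Γ x i ∈ neighbors Γ (T \ A)} : ℝ) := by
    simpa [mul_add] using card_nsmul_le_sum A (fun x => (#{i | Γ x i ∈ neighbors Γ (T \ A)} : ℝ))
      ((t : ℝ) + 1) fun x hx => by exact_mod_cast hwasted x hx
  have hA1 : (1 : ℝ) ≤ #A := by exact_mod_cast hA.card_pos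
  have hexpT : (1 - ε) * n * #T ≤ #(neighbors Γ T) := hexp T hTK
  by_contra! hTA
  have hTA' : (#T : ℝ) ≤ 2 * #A := by exact_mod_cast hTA
  nlinarith [mul_nonneg hε (Nat.cast_nonneg (Fintype.card ι) : (0:ℝ) ≤ n)]

end Neighbors

lemma lt_clog_of_two_mul_lt {a : ℕ → ℕ} {K m : ℕ} (hK : 2 ≤ K) (ha0 : a 0 ≤ K)
    (ha : ∀ j, 0 < a (j + 1) → 2 * a (j + 1) < a j) (hm : 0 < a m) : m < Nat.clog 2 K := by
  have hpow : ∀ j, 2 ^ j * a j ≤ a 0 := by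
    intro j
    induction j with
    | zero => simp
    | succ j ih =>
      rcases Nat.eq_zero_or_pos (a (j + 1)) with h | h
      · simp [h]
      · calc 2 ^ (j + 1) * a (j + 1) = 2 ^ j * (2 * a (j + 1)) := by ring
          _ ≤ 2 ^ j * a j := Nat.mul_le_mul_left _ (ha j h).le
          _ ≤ a 0 := ih
  rw [Nat.lt_clog_iff_pow_lt one_lt_two]
  cases m with
  | zero => rw [pow_zero]; omega
  | succ m =>
    calc 2 ^ (m + 1) ≤ 2 ^ (m + 1) * a (m + 1) := Nat.le_mul_of_pos_right _ hm
      _ = 2 ^ m * (2 * a (m + 1)) := by ring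
      _ < 2 ^ m * a m := Nat.mul_lt_mul_of_pos_left (ha m hm) (by positivity)
      _ ≤ K := (hpow m).trans ha0

structure GreedyState (L ι : Type*) where
  done : Finset L
  level : L → ℕ
  kept : L → Finset ι

namespace GreedyState

variable {L R ι : Type*}

def init : GreedyState L ι := ⟨∅, fun _ => 0, fun _ => ∅⟩

def atLeast (σ : GreedyState L ι) (j : ℕ) : Finset L := {y ∈ σ.done | j ≤ σ.level y}

def Extends (σ σ' : GreedyState L ι) : Prop :=
  σ.done ⊆ σ'.done ∧ ∀ y ∈ σ.done, σ'.level y = σ.level y ∧ σ'.kept y = σ.kept y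

lemma Extends.refl (σ : GreedyState L ι) : σ.Extends σ := ⟨subset_rfl, fun _ _ => ⟨rfl, rfl⟩⟩

lemma Extends.trans {σ₁ σ₂ σ₃ : GreedyState L ι} (h₁₂ : σ₁.Extends σ₂) (h₂₃ : σ₂.Extends σ₃) :
    σ₁.Extends σ₃ :=
  ⟨h₁₂.1.trans h₂₃.1, fun y hy => by
    rw [(h₂₃.2 y (h₁₂.1 hy)).1, (h₂₃.2 y (h₁₂.1 hy)).2, (h₁₂.2 y hy).1, (h₁₂.2 y hy).2]
    exact ⟨rfl, rfl⟩⟩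

variable [DecidableEq R] (Γ : L → ι → R)

def Occupies (σ : GreedyState L ι) (j : ℕ) (p : R) : Prop :=
  ∃ y ∈ σ.done, σ.level y = j ∧ p ∈ (σ.kept y).image (Γ y)

instance (σ : GreedyState L ι) (j : ℕ) (p : R) : Decidable (σ.Occupies Γ j p) := by
  unfold Occupies; infer_instance

lemma Occupies.mono {σ σ' : GreedyState L ι} (h : σ.Extends σ') {j : ℕ} {p : R}
    (hp : σ.Occupies Γ j p) : σ'.Occupies Γ j p := by
  obtain ⟨y, hy, hlevel, hkept⟩ := hp
  exact ⟨y, h.1 hy, (h.2 y hy).1.trans hlevel, (h.2 y hy).2 ▸ hkept⟩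

variable [Fintype ι]

def blocked (σ : GreedyState L ι) (x : L) (j : ℕ) : Finset ι := {i | σ.Occupies Γ j (Γ x i)}

lemma blocked_mono {σ σ' : GreedyState L ι} (h : σ.Extends σ') (x : L) (j : ℕ) :
    σ.blocked Γ x j ⊆ σ'.blocked Γ x j :=
  fun _ => by simpa [blocked] using Occupies.mono Γ h

variable (t : ℕ)

lemma exists_card_blocked_le (σ : GreedyState L ι) (x : L) :
    ∃ j, #(σ.blocked Γ x j) ≤ t := by
  refine ⟨σ.done.sup σ.level + 1, ?_⟩
  suffices σ.blocked Γ x (σ.done.sup σ.level + 1) = ∅ by simp [this]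
  refine filter_eq_empty_iff.2 fun i _ ⟨y, hy, hlevel, _⟩ => ?_
  have := le_sup (f := σ.level) hy
  omega

def freeLevel (σ : GreedyState L ι) (x : L) : ℕ :=
  Nat.find (σ.exists_card_blocked_le Γ t x)

lemma lt_card_blocked_of_lt_freeLevel {σ : GreedyState L ι} {x : L} {j : ℕ}
    (hj : j < σ.freeLevel Γ t x) : t < #(σ.blocked Γ x j) :=
  not_le.1 (Nat.find_min (σ.exists_card_blocked_le Γ t x) hj)

def freeEdges (σ : GreedyState L ι) (x : L) : Finset ι :=
  {i | ¬ σ.Occupies Γ (σ.freeLevel Γ t x) (Γ x i)}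

lemma card_le_card_freeEdges_add (σ : GreedyState L ι) (x : L) :
    Fintype.card ι ≤ #(σ.freeEdges Γ t x) + t := by
  have hsplit := card_filter_add_card_filter_not (s := univ)
    fun i => σ.Occupies Γ (σ.freeLevel Γ t x) (Γ x i)
  have hblocked : #(σ.blocked Γ x (σ.freeLevel Γ t x)) ≤ t :=
    Nat.find_spec (σ.exists_card_blocked_le Γ t x)
  rw [card_univ] at hsplit
  unfold blocked at hblocked
  unfold freeEdges
  omega

lemma not_mem_image_freeEdges {σ : GreedyState L ι} {x : L} {p : R}
    (hp : σ.Occupies Γ (σ.freeLevel Γ t x) p) : p ∉ (σ.freeEdges Γ t x).image (Γ x) := by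
  rintro hpx
  obtain ⟨i, hi, rfl⟩ := mem_image.1 hpx
  exact (mem_filter.1 hi).2 hp

structure Valid (σ : GreedyState L ι) : Prop where
  kept_eq_empty : ∀ y ∉ σ.done, σ.kept y = ∅
  card_kept : ∀ y ∈ σ.done, Fintype.card ι ≤ #(σ.kept y) + t
  lt_card_blocked : ∀ y ∈ σ.done, ∀ j < σ.level y, t < #(σ.blocked Γ y j)
  injOn_level : ∀ p, Set.InjOn σ.level {y | y ∈ σ.done ∧ p ∈ (σ.kept y).image (Γ y)}

lemma valid_init : (init : GreedyState L ι).Valid Γ t :=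
  ⟨fun _ _ => rfl, by simp [init], by simp [init], fun _ _ hy => by simp [init] at hy⟩

variable [DecidableEq L]

def step (σ : GreedyState L ι) (x : L) : GreedyState L ι :=
  if x ∈ σ.done then σ else
    { done := insert x σ.done
      level := Function.update σ.level x (σ.freeLevel Γ t x)
      kept := Function.update σ.kept x (σ.freeEdges Γ t x) }

def run (S : List L) : GreedyState L ι := S.foldl (step Γ t) init

lemma extends_step (σ : GreedyState L ι) (x : L) : σ.Extends (σ.step Γ t x) := by
  unfold step
  split_ifs with hx
  · exact Extends.refl σ
  · refine ⟨subset_insert x σ.done, fun y hy => ?_⟩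
    simp [Function.update_of_ne (ne_of_mem_of_not_mem hy hx)]

lemma extends_foldl (σ : GreedyState L ι) (S : List L) : σ.Extends (S.foldl (step Γ t) σ) :=
  S.foldlRecOn _ (Extends.refl σ) fun _ h x _ => h.trans (extends_step Γ t _ x)

lemma done_step (σ : GreedyState L ι) (x : L) : (σ.step Γ t x).done = insert x σ.done := by
  unfold step
  split_ifs with hx
  · exact (insert_eq_of_mem hx).symm
  · rfl

lemma done_run (S : List L) : (run Γ t S : GreedyState L ι).done = S.toFinset := by
  induction S using List.reverseRecOn with
  | nil => rfl
  | append_singleton S x ih =>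
    rw [run, List.foldl_append, List.foldl_cons, List.foldl_nil, ← run, done_step, ih,
      List.toFinset_append, insert_eq, union_comm]
    rfl

lemma Valid.step {σ : GreedyState L ι} (hσ : σ.Valid Γ t) (x : L) : (σ.step Γ t x).Valid Γ t := by
  by_cases hx : x ∈ σ.done
  · simpa [GreedyState.step, hx] using hσ
  have hext := extends_step Γ t σ x
  rw [GreedyState.step, if_neg hx] at hext ⊢
  have hold {y} (hy : y ∈ σ.done) : y ≠ x := ne_of_mem_of_not_mem hy hx
  constructor
  · intro y hy
    rw [mem_insert, not_or] at hy
    simpa [Function.update_of_ne hy.1] using hσ.kept_eq_empty y hy.2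
  · intro y hy
    rcases mem_insert.1 hy with rfl | hy
    · simpa using card_le_card_freeEdges_add Γ t σ y
    · simpa [Function.update_of_ne (hold hy)] using hσ.card_kept y hy
  · intro y hy k hk
    refine lt_of_lt_of_le ?_ (card_le_card (blocked_mono Γ hext y k))
    rcases mem_insert.1 hy with rfl | hy
    · exact lt_card_blocked_of_lt_freeLevel Γ t (by simpa using hk)
    · simp only [Function.update_of_ne (hold hy)] at hk ⊢
      exact hσ.lt_card_blocked y hy k hk
  · intro p y ⟨hy, hpy⟩ z ⟨hz, hpz⟩ hyz
    rcases mem_insert.1 hy with rfl | hyσ <;> rcases mem_insert.1 hz with rfl | hzσ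
    · rfl
    · simp only [Function.update_self, Function.update_of_ne (hold hzσ)] at hpy hpz hyz
      exact (not_mem_image_freeEdges Γ t ⟨z, hzσ, hyz.symm, hpz⟩ hpy).elim
    · simp only [Function.update_self, Function.update_of_ne (hold hyσ)] at hpy hpz hyz
      exact (not_mem_image_freeEdges Γ t ⟨y, hyσ, hyz, hpy⟩ hpz).elim
    · simp only [Function.update_of_ne (hold hyσ), Function.update_of_ne (hold hzσ)] at hpy hpz hyz
      exact hσ.injOn_level p ⟨hyσ, hpy⟩ ⟨hzσ, hpz⟩ hyz

lemma valid_run (S : List L) : (run Γ t S : GreedyState L ι).Valid Γ t :=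
  S.foldlRecOn _ (valid_init Γ t) fun _ hσ x _ => hσ.step Γ t x

variable {S : List L} {x : L}

lemma kept_run_eq_empty (hx : x ∉ S) : (run Γ t S).kept x = ∅ :=
  (valid_run Γ t S).kept_eq_empty x (by rwa [done_run, List.mem_toFinset])

lemma card_le_card_kept_run_add (hx : x ∈ S) : Fintype.card ι ≤ #((run Γ t S).kept x) + t :=
  (valid_run Γ t S).card_kept x (by rwa [done_run, List.mem_toFinset])

lemma kept_run_of_prefix {S' : List L} (h : S <+: S') (hx : x ∈ S) :
    (run Γ t S').kept x = (run Γ t S).kept x := by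
  obtain ⟨u, rfl⟩ := h
  have hext := extends_foldl Γ t (run Γ t S) u
  rw [run, List.foldl_append]
  exact (hext.2 x (by rwa [done_run, List.mem_toFinset])).2

variable {Γ t} {σ : GreedyState L ι} {K : ℕ} {ε : ℝ}

lemma Valid.two_mul_card_atLeast_lt (hσ : σ.Valid Γ t) (hε : 0 ≤ ε)
    (hexp : Expander Γ K ((1 - ε) * Fintype.card ι)) (ht : 2 * ε * Fintype.card ι < t + 1)
    (hdone : #σ.done ≤ K) {j : ℕ} (hne : (σ.atLeast (j + 1)).Nonempty) :
    2 * #(σ.atLeast (j + 1)) < #(σ.atLeast j) := by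
  have hsub : σ.atLeast (j + 1) ⊆ σ.atLeast j :=
    fun y hy => by simp only [atLeast, mem_filter] at hy ⊢; exact ⟨hy.1, by omega⟩
  refine two_mul_card_lt_of_expander Γ hε hexp ht hsub
    ((card_le_card (filter_subset _ _)).trans hdone) hne fun x hx => ?_
  obtain ⟨hxσ, hxj⟩ := mem_filter.1 hx
  refine (hσ.lt_card_blocked x hxσ j hxj).trans_le (card_le_card fun i hi => ?_)
  obtain ⟨y, hy, hlevel, hp⟩ := (mem_filter.1 hi).2
  obtain ⟨i', -, hi'⟩ := mem_image.1 hp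
  refine mem_filter.2 ⟨mem_univ i, (mem_neighbors Γ).2 ⟨y, ?_, i', hi'⟩⟩
  simp [atLeast, hy, hlevel]

lemma Valid.level_lt_clog (hσ : σ.Valid Γ t) (hε : 0 ≤ ε)
    (hexp : Expander Γ K ((1 - ε) * Fintype.card ι)) (ht : 2 * ε * Fintype.card ι < t + 1)
    (hK : 2 ≤ K) (hdone : #σ.done ≤ K) {y : L} (hy : y ∈ σ.done) :
    σ.level y < Nat.clog 2 K :=
  lt_clog_of_two_mul_lt (a := fun j => #(σ.atLeast j)) hK
    ((card_le_card (filter_subset _ _)).trans hdone)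
    (fun _ hj => hσ.two_mul_card_atLeast_lt hε hexp ht hdone (card_pos.1 hj))
    (card_pos.2 ⟨y, mem_filter.2 ⟨hy, le_rfl⟩⟩)

lemma Valid.card_filter_le_clog (hσ : σ.Valid Γ t) (hε : 0 ≤ ε)
    (hexp : Expander Γ K ((1 - ε) * Fintype.card ι)) (ht : 2 * ε * Fintype.card ι < t + 1)
    (hK : 2 ≤ K) (hdone : #σ.done ≤ K) (p : R) :
    #{y ∈ σ.done | p ∈ (σ.kept y).image (Γ y)} ≤ Nat.clog 2 K := by
  simpa using card_le_card_of_injOn σ.level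
    (t := range (Nat.clog 2 K))
    (fun y hy => mem_range.2 (hσ.level_lt_clog hε hexp ht hK hdone (mem_filter.1 hy).1))
    (fun y hy z hz => hσ.injOn_level p (by simpa using hy) (by simpa using hz))

lemma ncard_le_clog (hε : 0 ≤ ε) (hexp : Expander Γ K ((1 - ε) * Fintype.card ι))
    (ht : 2 * ε * Fintype.card ι < t + 1) (hK : 2 ≤ K) (hS : S.length ≤ K) (p : R) :
    {x | x ∈ S ∧ ∃ i ∈ (run Γ t S).kept x, Γ x i = p}.ncard ≤ Nat.clog 2 K := by
  have hdone : #(run Γ t S).done ≤ K := by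
    rw [done_run]
    exact S.toFinset_card_le.trans hS
  have hset : {x | x ∈ S ∧ ∃ i ∈ (run Γ t S).kept x, Γ x i = p} =
      ↑{y ∈ (run Γ t S).done | p ∈ ((run Γ t S).kept y).image (Γ y)} := by
    ext
    simp [done_run]
  rw [hset, Set.ncard_coe_finset]
  exact (valid_run Γ t S).card_filter_le_clog hε hexp ht hK hdone p

end GreedyState

theorem onlineMatching_of_losslessExpander_general
    {L R : Type*} [DecidableEq L] [DecidableEq R]
    (D : ℕ) (Γ : L → Fin D → R) (Kmax : ℕ) (hK : 2 ≤ Kmax)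
    (ε : ℝ) (hε : 0 < ε)
    (hexp : Expander Γ Kmax ((1 - ε) * (D : ℝ))) :
    OnlineMatching Γ ((1 - 4 * ε) * (D : ℝ)) (2 * Nat.clog 2 Kmax) Kmax := by
  set t := ⌊2 * ε * D⌋₊
  have hexp' : Expander Γ Kmax ((1 - ε) * Fintype.card (Fin D)) := by rwa [Fintype.card_fin]
  have ht : 2 * ε * Fintype.card (Fin D) < t + 1 := by
    rw [Fintype.card_fin]
    exact Nat.lt_floor_add_one _
  have ht' : (t : ℝ) ≤ 2 * ε * D := Nat.floor_le (by positivity)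
  refine ⟨fun S => (GreedyState.run Γ t S).kept, fun S _ x => ⟨GreedyState.kept_run_eq_empty Γ t,
    fun hx => ⟨?_, fun S' _ h => (GreedyState.kept_run_of_prefix Γ t h hx).symm⟩⟩,
    fun S hS p => ?_⟩
  · have hkept : (D : ℝ) ≤ #((GreedyState.run Γ t S).kept x) + t := by
      exact_mod_cast Fintype.card_fin D ▸ GreedyState.card_le_card_kept_run_add Γ t hx
    nlinarith [mul_nonneg hε.le (Nat.cast_nonneg D : (0 : ℝ) ≤ D)]
  · exact (GreedyState.ncard_le_clog hε.le hexp' ht hK hS p).trans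
      (Nat.le_mul_of_pos_left _ two_pos)

/-- **Online matching properties of lossless expanders (with sharing).**
If `Γ : L × [D] → R` (with `D ≥ 1`) is a `(K_max, (1−ε)D)` expander, where `ε > 0`
and `K_max ≥ 2`, then it admits `((1−4ε)D, 2⌈log₂ K_max⌉)` online matching up to
size `K_max`. -/
theorem onlineMatching_of_losslessExpander
    {L R : Type*} [Fintype L] [Fintype R] [DecidableEq L] [DecidableEq R]
    (D : ℕ) (hD : 1 ≤ D) (Γ : L → Fin D → R) (Kmax : ℕ) (hK : 2 ≤ Kmax)
    (ε : ℝ) (hε : 0 < ε)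
    (hexp : Expander Γ Kmax ((1 - ε) * (D : ℝ))) :
    OnlineMatching Γ ((1 - 4 * ε) * (D : ℝ)) (2 * Nat.clog 2 Kmax) Kmax :=
  onlineMatching_of_losslessExpander_general D Γ Kmax hK ε hε hexp
end

section
/- There exists a bipartite graph with left degree 2 that admits (1,1) offline matching up to size 2 but does not admit (1,1) online matching up to size 2. Concretely, the graph Γ : L × [2] → R with L = {x₁, x₂, x₃}, R = {y₁, y₂}, Γ(x₁,1) = Γ(x₁,2) = y₁, Γ(x₂,1) = y₁, Γ(x₂,2) = y₂, and Γ(x₃,1) = Γ(x₃,2) = y₂ has both properties. -/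
open Finset

/-- The graph admits `(ℓ, r)` offline matching up to size `K`: for every set `S` of
at most `K` left nodes there are sets `A x ⊆ [D]` of at least `ℓ` edge labels for
`x ∈ S` such that every right node `p` is the endpoint of an assigned edge of at
most `r` distinct elements of `S`. -/
def OfflineMatching {L R ι : Type*} (Γ : L → ι → R) (ℓ : ℝ) (r K : ℕ) : Prop :=
  ∀ S : Finset L, S.card ≤ K →
    ∃ A : L → Finset ι,
      (∀ x ∈ S, ℓ ≤ ((A x).card : ℝ)) ∧
      (∀ p : R, {x : L | x ∈ S ∧ ∃ i ∈ A x, Γ x i = p}.ncard ≤ r)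

/-- The concrete graph with `L = {x₁, x₂, x₃}`, `R = {y₁, y₂}`, left degree `2`,
and edges `Γ(x₁,1) = Γ(x₁,2) = y₁`, `Γ(x₂,1) = y₁`, `Γ(x₂,2) = y₂`,
`Γ(x₃,1) = Γ(x₃,2) = y₂`. -/
def exGraph : Fin 3 → Fin 2 → Fin 2 := ![![0, 0], ![0, 1], ![1, 1]]

/-!
Offline, a set of at most two left nodes never contains both `x₁` and `x₃`, so one edge per
node can be chosen with distinct endpoints. Online, the request list `[x₂]` forces `x₂` to
commit to an edge; whichever endpoint it picks is the only neighbour of `x₁` or of `x₃`,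
and requesting that node next overloads it.
-/

theorem offlineMatching_one_one_of_injOn {L R ι : Type*} {Γ : L → ι → R} {K : ℕ}
    (h : ∀ S : Finset L, S.card ≤ K → ∃ c : L → ι, Set.InjOn (fun x => Γ x (c x)) S) :
    OfflineMatching Γ 1 1 K := by
  intro S hS
  obtain ⟨c, hc⟩ := h S hS
  refine ⟨fun x => {c x}, fun x _ => by simp, fun p => ?_⟩
  rw [Set.ncard_le_one (S.finite_toSet.subset fun x hx => hx.1)]
  rintro a ⟨ha, i, hi, rfl⟩ b ⟨hb, j, hj, hab⟩
  rw [Finset.mem_singleton] at hi hj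
  subst hi hj
  exact hc ha hb hab.symm

theorem not_onlineMatching_one_of_forced {L R ι : Type*} {Γ : L → ι → R} {ℓ : ℝ} {K : ℕ}
    (hℓ : 0 < ℓ) (hK : 2 ≤ K) (x : L) (hx : ∀ i, ∃ z ≠ x, ∀ j, Γ z j = Γ x i) :
    ¬ OnlineMatching Γ ℓ 1 K := by
  rintro ⟨f, hf, hload⟩
  have hxK : [x].length ≤ K := by simp; omega
  have hxzK : ∀ z, [x, z].length ≤ K := fun z => by simpa using hK
  have hnonempty : ∀ S : List L, S.length ≤ K → ∀ y ∈ S, (f S y).Nonempty := fun S hS y hy =>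
    Finset.card_pos.mp (by exact_mod_cast hℓ.trans_le ((hf S hS y).2 hy).1)
  obtain ⟨i, hi⟩ := hnonempty [x] hxK x (List.mem_singleton_self x)
  obtain ⟨z, hzx, hz⟩ := hx i
  obtain ⟨j, hj⟩ := hnonempty [x, z] (hxzK z) z (by simp)
  have hstable : f [x] x = f [x, z] x :=
    ((hf [x] hxK x).2 (List.mem_singleton_self x)).2 [x, z] (hxzK z) ⟨[z], rfl⟩
  have hunique := (Set.ncard_le_one ((List.finite_toSet _).subset fun y hy => hy.1)).mp
    (hload [x, z] (hxzK z) (Γ x i))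
  exact hzx (hunique z ⟨by simp, j, hj, hz j⟩ x ⟨by simp, i, hstable ▸ hi, rfl⟩)

theorem exGraph_injOn (S : Finset (Fin 3)) (hS : S.card ≤ 2) :
    Set.InjOn (fun x => exGraph x (if 0 ∈ S then 1 else 0)) S := by
  revert S
  unfold Set.InjOn
  decide

/-- **Online matching is strictly stronger than offline matching.**
The concrete graph `exGraph` admits `(1,1)` offline matching up to size `2` but does
not admit `(1,1)` online matching up to size `2`. -/
theorem offline_not_online :
    OfflineMatching exGraph 1 1 2 ∧ ¬ OnlineMatching exGraph 1 1 2 :=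
  ⟨offlineMatching_one_one_of_injOn fun S hS => ⟨_, exGraph_injOn S hS⟩,
    not_onlineMatching_one_of_forced one_pos le_rfl 1 (by decide)⟩
end
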